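/- arXiv:2205.15007 — 7 statements merged into one kernel-verified Lean document; each statement's English description precedes it below -/
import Mathlib

section
/- Suppose φ, ψ ∈ L¹(ℝ) ∩ L²(ℝ). Then for every z ∈ ℂ with Im z ≠ 0: (i) the integrals defining y₁ᶻ(x) and y₂ᶻ(x) converge absolutely with |y₁ᶻ(x)| ≤ ‖φ‖_{L¹(ℝ)} and |y₂ᶻ(x)| ≤ ‖ψ‖_{L¹(ℝ)} for all x ∈ ℝ; (ii) y₁ᶻ and y₂ᶻ belong to L²(ℝ), with ‖y₁ᶻ‖_{L²(ℝ)} ≤ (2/|Im z|)·‖φ‖_{L²(ℝ)} and ‖y₂ᶻ‖_{L²(ℝ)} ≤ (2/|Im z|)·‖ψ‖_{L²(ℝ)}. -/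
open MeasureTheory Set Complex Filter Topology

/-- `y₁ᶻ(x)`: for `Im z > 0`, `∫_{−∞}^x e^{iz(x−s)} φ(s) ds`;
for `Im z < 0`, `−∫_x^∞ e^{iz(x−s)} φ(s) ds`. -/
noncomputable def y₁ (φ : ℝ → ℂ) (z : ℂ) (x : ℝ) : ℂ :=
  if 0 < z.im then ∫ s in Iic x, Complex.exp (Complex.I * z * ((x - s : ℝ) : ℂ)) * φ s
  else -∫ s in Ici x, Complex.exp (Complex.I * z * ((x - s : ℝ) : ℂ)) * φ s

/-- `y₂ᶻ(x)`: for `Im z > 0`, `−∫_x^∞ e^{−iz(x−s)} ψ(s) ds`;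
for `Im z < 0`, `∫_{−∞}^x e^{−iz(x−s)} ψ(s) ds`. -/
noncomputable def y₂ (ψ : ℝ → ℂ) (z : ℂ) (x : ℝ) : ℂ :=
  if 0 < z.im then -∫ s in Ici x, Complex.exp (-Complex.I * z * ((x - s : ℝ) : ℂ)) * ψ s
  else ∫ s in Iic x, Complex.exp (-Complex.I * z * ((x - s : ℝ) : ℂ)) * ψ s

open scoped ENNReal

/-!
On the half-line over which each integral is taken, `|e^{iz(x-s)}| = e^{-|Im z|·|x-s|} ≤ 1`;
this gives absolute convergence and the pointwise `L¹` bound. The `L²` bound is Schur's test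
for the kernel `k(x, s) = e^{-|Im z|·|x-s|}`, whose integral in either variable is `2/|Im z|`:
Cauchy–Schwarz against the weight `k(x, ·)` gives `|y(x)|² ≤ (2/|Im z|) ∫ k(x,s)|φ(s)|² ds`, and
integrating in `x` (Tonelli) gives the claim. Finally `y₂ᶻ` for `ψ` is `y₁^{-z}` for `ψ`.
-/

section SchurTest

variable {α β : Type*} [MeasurableSpace α] [MeasurableSpace β] {μ : Measure α} {ν : Measure β}

theorem ENNReal.sq_rpow_inv_two (x : ℝ≥0∞) : (x ^ 2) ^ (2⁻¹ : ℝ) = x := by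
  simpa using ENNReal.pow_rpow_inv_natCast two_ne_zero x

theorem ENNReal.rpow_inv_two_sq (x : ℝ≥0∞) : (x ^ (2⁻¹ : ℝ)) ^ 2 = x := by
  simpa using ENNReal.rpow_inv_natCast_pow two_ne_zero x

theorem sq_eLpNorm_two {E : Type*} [NormedAddCommGroup E] (f : α → E) :
    eLpNorm f 2 μ ^ 2 = ∫⁻ x, ‖f x‖ₑ ^ 2 ∂μ := by
  simpa using eLpNorm_nnreal_pow_eq_lintegral (f := f) (μ := μ) (p := 2) two_ne_zero

theorem sq_lintegral_mul_le {k F : β → ℝ≥0∞} (hk : AEMeasurable k ν) (hF : AEMeasurable F ν) :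
    (∫⁻ s, k s * F s ∂ν) ^ 2 ≤ (∫⁻ s, k s ∂ν) * ∫⁻ s, k s * F s ^ 2 ∂ν := by
  have hsplit : ∀ s, k s ^ (2⁻¹ : ℝ) * (k s * F s ^ 2) ^ (2⁻¹ : ℝ) = k s * F s := fun s ↦ by
    rw [← ENNReal.mul_rpow_of_nonneg _ _ (by norm_num), ← ENNReal.sq_rpow_inv_two (k s * F s)]
    ring_nf
  have h := ENNReal.lintegral_mul_norm_pow_le hk (hk.mul (hF.pow_const 2))
    (p := 2⁻¹) (q := 2⁻¹) (by norm_num) (by norm_num) (by norm_num)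
  simp only [Pi.mul_apply, hsplit] at h
  calc (∫⁻ s, k s * F s ∂ν) ^ 2
      ≤ ((∫⁻ s, k s ∂ν) ^ (2⁻¹ : ℝ) * (∫⁻ s, k s * F s ^ 2 ∂ν) ^ (2⁻¹ : ℝ)) ^ 2 := by gcongr
    _ = (∫⁻ s, k s ∂ν) * ∫⁻ s, k s * F s ^ 2 ∂ν := by
      rw [mul_pow, ENNReal.rpow_inv_two_sq, ENNReal.rpow_inv_two_sq]

variable [SFinite μ] [SFinite ν] {k : α → β → ℝ≥0∞}

theorem lintegral_sq_lintegral_mul_le (hk : Measurable (Function.uncurry k)) {C₁ C₂ : ℝ≥0∞}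
    (hrow : ∀ x, ∫⁻ s, k x s ∂ν ≤ C₁) (hcol : ∀ s, ∫⁻ x, k x s ∂μ ≤ C₂) {F : β → ℝ≥0∞}
    (hF : AEMeasurable F ν) :
    ∫⁻ x, (∫⁻ s, k x s * F s ∂ν) ^ 2 ∂μ ≤ C₁ * C₂ * ∫⁻ s, F s ^ 2 ∂ν := by
  have hkF : AEMeasurable (fun p : α × β ↦ k p.1 p.2 * F p.2 ^ 2) (μ.prod ν) :=
    hk.aemeasurable.mul (hF.comp_snd.pow_const 2)
  calc ∫⁻ x, (∫⁻ s, k x s * F s ∂ν) ^ 2 ∂μ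
      ≤ ∫⁻ x, C₁ * ∫⁻ s, k x s * F s ^ 2 ∂ν ∂μ := lintegral_mono fun x ↦
        (sq_lintegral_mul_le hk.of_uncurry_left.aemeasurable hF).trans
          (mul_le_mul_left (hrow x) _)
    _ = C₁ * ∫⁻ s, (∫⁻ x, k x s ∂μ) * F s ^ 2 ∂ν := by
      rw [lintegral_const_mul'' _ hkF.lintegral_prod_right', lintegral_lintegral_swap hkF]
      congr 1
      exact lintegral_congr fun s ↦ lintegral_mul_const (F s ^ 2) hk.of_uncurry_right
    _ ≤ C₁ * ∫⁻ s, C₂ * F s ^ 2 ∂ν := by gcongr with s; exact hcol s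
    _ = C₁ * C₂ * ∫⁻ s, F s ^ 2 ∂ν := by
      rw [lintegral_const_mul'' _ (hF.pow_const 2), mul_assoc]

theorem eLpNorm_two_le_of_enorm_le_lintegral_mul {E E' : Type*} [NormedAddCommGroup E]
    [NormedAddCommGroup E'] (hk : Measurable (Function.uncurry k)) {C : ℝ≥0∞}
    (hrow : ∀ x, ∫⁻ s, k x s ∂ν ≤ C) (hcol : ∀ s, ∫⁻ x, k x s ∂μ ≤ C) {g : α → E} {f : β → E'}
    (hf : AEStronglyMeasurable f ν) (hg : ∀ x, ‖g x‖ₑ ≤ ∫⁻ s, k x s * ‖f s‖ₑ ∂ν) :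
    eLpNorm g 2 μ ≤ C * eLpNorm f 2 ν := by
  rw [← ENNReal.pow_le_pow_left_iff two_ne_zero, mul_pow, sq_eLpNorm_two, sq_eLpNorm_two, sq]
  exact (lintegral_mono fun x ↦ pow_le_pow_left' (hg x) 2).trans
    (lintegral_sq_lintegral_mul_le hk hrow hcol hf.enorm)

end SchurTest

theorem integral_exp_neg_mul_abs {a : ℝ} (ha : 0 < a) :
    ∫ t : ℝ, Real.exp (-(a * |t|)) = 2 / a := by
  rw [integral_comp_abs (f := fun t ↦ Real.exp (-(a * t)))]
  simp_rw [← neg_mul]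
  rw [integral_exp_mul_Ioi (neg_neg_iff_pos.mpr ha), mul_zero, Real.exp_zero]
  field_simp

theorem integrable_exp_neg_mul_abs {a : ℝ} (ha : 0 < a) :
    Integrable fun t : ℝ ↦ Real.exp (-(a * |t|)) := by
  -- the integral of a non-integrable function is `0`, not `2 / a`
  by_contra h
  have := integral_exp_neg_mul_abs ha
  rw [integral_undef h] at this
  exact (div_pos two_pos ha).ne this

theorem lintegral_exp_neg_mul_abs_sub {a : ℝ} (ha : 0 < a) (x : ℝ) :
    ∫⁻ s : ℝ, ENNReal.ofReal (Real.exp (-(a * |x - s|))) = ENNReal.ofReal (2 / a) := by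
  rw [lintegral_sub_left_eq_self (fun t ↦ ENNReal.ofReal (Real.exp (-(a * |t|)))) x,
    ← integral_exp_neg_mul_abs ha, ofReal_integral_eq_lintegral_ofReal
      (integrable_exp_neg_mul_abs ha) (ae_of_all _ fun _ ↦ (Real.exp_pos _).le)]

section ExpDecayKernel

variable {a : ℝ} {K : ℝ → ℝ → ℂ} {S : ℝ → Set ℝ} {f : ℝ → ℂ}

theorem enorm_setIntegral_mul_le_lintegral (hS : MeasurableSet {p : ℝ × ℝ | p.2 ∈ S p.1})
    (hKS : ∀ x, ∀ s ∈ S x, ‖K x s‖ ≤ Real.exp (-(a * |x - s|))) (x : ℝ) :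
    ‖∫ s in S x, K x s * f s‖ₑ ≤ ∫⁻ s, ENNReal.ofReal (Real.exp (-(a * |x - s|))) * ‖f s‖ₑ :=
  calc ‖∫ s in S x, K x s * f s‖ₑ
      ≤ ∫⁻ s in S x, ‖K x s * f s‖ₑ := enorm_integral_le_lintegral_enorm _
    _ ≤ ∫⁻ s in S x, ENNReal.ofReal (Real.exp (-(a * |x - s|))) * ‖f s‖ₑ := by
      refine lintegral_mono_ae (ae_restrict_of_forall_mem (measurable_prodMk_left hS) ?_)
      intro s hs
      rw [enorm_mul, ← ofReal_norm]
      gcongr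
      exact hKS x s hs
    _ ≤ _ := setLIntegral_le_lintegral _ _

theorem aestronglyMeasurable_setIntegral_mul (hK : Measurable (Function.uncurry K))
    (hS : MeasurableSet {p : ℝ × ℝ | p.2 ∈ S p.1}) (hf : AEStronglyMeasurable f) :
    AEStronglyMeasurable fun x ↦ ∫ s in S x, K x s * f s := by
  have hG : AEStronglyMeasurable
      ({p : ℝ × ℝ | p.2 ∈ S p.1}.indicator fun p ↦ K p.1 p.2 * f p.2) (volume.prod volume) :=
    (hK.aestronglyMeasurable.mul hf.comp_snd).indicator hS
  refine hG.integral_prod_right'.congr (ae_of_all _ fun x ↦ ?_)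
  have hSx : MeasurableSet (S x) := measurable_prodMk_left hS
  exact integral_indicator hSx

theorem eLpNorm_setIntegral_mul_le (ha : 0 < a) (hS : MeasurableSet {p : ℝ × ℝ | p.2 ∈ S p.1})
    (hKS : ∀ x, ∀ s ∈ S x, ‖K x s‖ ≤ Real.exp (-(a * |x - s|))) (hf : AEStronglyMeasurable f) :
    eLpNorm (fun x ↦ ∫ s in S x, K x s * f s) 2 ≤ ENNReal.ofReal (2 / a) * eLpNorm f 2 := by
  refine eLpNorm_two_le_of_enorm_le_lintegral_mul (by fun_prop)
    (fun x ↦ (lintegral_exp_neg_mul_abs_sub ha x).le) (fun s ↦ ?_) hf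
    (enorm_setIntegral_mul_le_lintegral hS hKS)
  simp_rw [abs_sub_comm _ s]
  exact (lintegral_exp_neg_mul_abs_sub ha s).le

theorem memLp_setIntegral_mul (ha : 0 < a) (hK : Measurable (Function.uncurry K))
    (hS : MeasurableSet {p : ℝ × ℝ | p.2 ∈ S p.1})
    (hKS : ∀ x, ∀ s ∈ S x, ‖K x s‖ ≤ Real.exp (-(a * |x - s|))) (hf : MemLp f 2) :
    MemLp (fun x ↦ ∫ s in S x, K x s * f s) 2 :=
  ⟨aestronglyMeasurable_setIntegral_mul hK hS hf.1,
    (eLpNorm_setIntegral_mul_le ha hS hKS hf.1).trans_lt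
      (ENNReal.mul_lt_top ENNReal.ofReal_lt_top hf.2)⟩

end ExpDecayKernel

theorem norm_exp_I_mul_ofReal {z : ℂ} {t : ℝ} (h : 0 ≤ z.im * t) :
    ‖Complex.exp (I * z * t)‖ = Real.exp (-(|z.im| * |t|)) := by
  rw [norm_exp, ← abs_mul, abs_of_nonneg h]
  simp

theorem norm_exp_I_mul_ofReal_le_one {z : ℂ} {t : ℝ} (h : 0 ≤ z.im * t) :
    ‖Complex.exp (I * z * t)‖ ≤ 1 := by
  rw [norm_exp_I_mul_ofReal h, Real.exp_le_one_iff, neg_nonpos]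
  positivity

section ExpIntegrand

variable {z : ℂ} {f : ℝ → ℂ} {S : Set ℝ} {x : ℝ}

theorem integrableOn_exp_I_mul_sub_mul (hf : Integrable f) (hSm : MeasurableSet S)
    (hS : ∀ s ∈ S, 0 ≤ z.im * (x - s)) :
    IntegrableOn (fun s ↦ Complex.exp (I * z * ((x - s : ℝ) : ℂ)) * f s) S :=
  hf.restrict.bdd_mul (by fun_prop : Continuous _).aestronglyMeasurable
    (ae_restrict_of_forall_mem hSm fun s hs ↦ norm_exp_I_mul_ofReal_le_one (hS s hs))

theorem norm_setIntegral_exp_I_mul_sub_mul_le (hf : Integrable f) (hSm : MeasurableSet S)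
    (hS : ∀ s ∈ S, 0 ≤ z.im * (x - s)) :
    ‖∫ s in S, Complex.exp (I * z * ((x - s : ℝ) : ℂ)) * f s‖ ≤ ∫ s, ‖f s‖ := by
  refine (norm_integral_le_of_norm_le hf.norm.restrict
    (ae_restrict_of_forall_mem hSm fun s hs ↦ ?_)).trans
    (setIntegral_le_integral hf.norm (ae_of_all _ fun _ ↦ norm_nonneg _))
  rw [norm_mul]
  exact mul_le_of_le_one_left (norm_nonneg _) (norm_exp_I_mul_ofReal_le_one (hS s hs))

end ExpIntegrand

theorem y₁_eq_ite (φ : ℝ → ℂ) (z : ℂ) :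
    y₁ φ z = if 0 < z.im then fun x ↦ ∫ s in Iic x, Complex.exp (I * z * ((x - s : ℝ) : ℂ)) * φ s
      else -fun x ↦ ∫ s in Ici x, Complex.exp (I * z * ((x - s : ℝ) : ℂ)) * φ s := by
  unfold y₁
  split_ifs <;> rfl

theorem y₂_eq_y₁_neg (ψ : ℝ → ℂ) {z : ℂ} (hz : z.im ≠ 0) : y₂ ψ z = y₁ ψ (-z) := by
  have h : -I * z = I * -z := by ring
  funext x
  simp only [y₁, y₂, neg_im, neg_pos, h]
  rcases hz.lt_or_gt with hneg | hpos
  · simp [hneg, not_lt_of_gt hneg]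
  · simp [hpos, not_lt_of_gt hpos]

section BoundsOnY₁

variable {φ : ℝ → ℂ} {z : ℂ}

theorem measurableSet_snd_mem_Iic : MeasurableSet {p : ℝ × ℝ | p.2 ∈ Iic p.1} :=
  measurableSet_le measurable_snd measurable_fst

theorem measurableSet_snd_mem_Ici : MeasurableSet {p : ℝ × ℝ | p.2 ∈ Ici p.1} :=
  measurableSet_le measurable_fst measurable_snd

theorem norm_y₁_le (hφ : Integrable φ) (x : ℝ) : ‖y₁ φ z x‖ ≤ ∫ s, ‖φ s‖ := by
  rw [y₁_eq_ite]
  split_ifs with h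
  · exact norm_setIntegral_exp_I_mul_sub_mul_le hφ measurableSet_Iic
      fun s hs ↦ mul_nonneg h.le (sub_nonneg.2 hs)
  · rw [Pi.neg_apply, norm_neg]
    exact norm_setIntegral_exp_I_mul_sub_mul_le hφ measurableSet_Ici
      fun s hs ↦ mul_nonneg_of_nonpos_of_nonpos (not_lt.1 h) (sub_nonpos.2 hs)

theorem eLpNorm_y₁_le (hz : z.im ≠ 0) (hφ : AEStronglyMeasurable φ) :
    eLpNorm (y₁ φ z) 2 ≤ ENNReal.ofReal (2 / |z.im|) * eLpNorm φ 2 := by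
  rw [y₁_eq_ite]
  split_ifs with h
  · exact eLpNorm_setIntegral_mul_le (abs_pos.2 hz) measurableSet_snd_mem_Iic
      (fun x s hs ↦ (norm_exp_I_mul_ofReal (mul_nonneg h.le (sub_nonneg.2 hs))).le) hφ
  · rw [eLpNorm_neg]
    exact eLpNorm_setIntegral_mul_le (abs_pos.2 hz) measurableSet_snd_mem_Ici
      (fun x s hs ↦ (norm_exp_I_mul_ofReal
        (mul_nonneg_of_nonpos_of_nonpos (not_lt.1 h) (sub_nonpos.2 hs))).le) hφ

theorem memLp_y₁ (hz : z.im ≠ 0) (hφ : MemLp φ 2) : MemLp (y₁ φ z) 2 := by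
  refine ⟨?_, (eLpNorm_y₁_le hz hφ.1).trans_lt (ENNReal.mul_lt_top ENNReal.ofReal_lt_top hφ.2)⟩
  rw [y₁_eq_ite]
  split_ifs
  · exact aestronglyMeasurable_setIntegral_mul (by fun_prop) measurableSet_snd_mem_Iic hφ.1
  · exact (aestronglyMeasurable_setIntegral_mul (by fun_prop) measurableSet_snd_mem_Ici hφ.1).neg

end BoundsOnY₁

/-- if `φ, ψ ∈ L¹(ℝ) ∩ L²(ℝ)` then for every `z` with `Im z ≠ 0`:
(i) the integrals defining `y₁ᶻ(x)`, `y₂ᶻ(x)` converge absolutely with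
`|y₁ᶻ(x)| ≤ ‖φ‖₁` and `|y₂ᶻ(x)| ≤ ‖ψ‖₁`; (ii) `y₁ᶻ, y₂ᶻ ∈ L²(ℝ)` with
`‖y₁ᶻ‖₂ ≤ (2/|Im z|)‖φ‖₂` and `‖y₂ᶻ‖₂ ≤ (2/|Im z|)‖ψ‖₂`. -/
theorem statement_0 (φ ψ : ℝ → ℂ)
    (hφ1 : MemLp φ 1 volume) (hφ2 : MemLp φ 2 volume)
    (hψ1 : MemLp ψ 1 volume) (hψ2 : MemLp ψ 2 volume)
    (z : ℂ) (hz : z.im ≠ 0) :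
    ((0 < z.im → ∀ x : ℝ,
        IntegrableOn
          (fun s => Complex.exp (Complex.I * z * ((x - s : ℝ) : ℂ)) * φ s) (Iic x) volume ∧
        IntegrableOn
          (fun s => Complex.exp (-Complex.I * z * ((x - s : ℝ) : ℂ)) * ψ s) (Ici x) volume) ∧
     (z.im < 0 → ∀ x : ℝ,
        IntegrableOn
          (fun s => Complex.exp (Complex.I * z * ((x - s : ℝ) : ℂ)) * φ s) (Ici x) volume ∧
        IntegrableOn
          (fun s => Complex.exp (-Complex.I * z * ((x - s : ℝ) : ℂ)) * ψ s) (Iic x) volume)) ∧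
    (∀ x : ℝ, ‖y₁ φ z x‖ ≤ ∫ s : ℝ, ‖φ s‖) ∧
    (∀ x : ℝ, ‖y₂ ψ z x‖ ≤ ∫ s : ℝ, ‖ψ s‖) ∧
    MemLp (y₁ φ z) 2 volume ∧
    MemLp (y₂ ψ z) 2 volume ∧
    eLpNorm (y₁ φ z) 2 volume ≤ ENNReal.ofReal (2 / |z.im|) * eLpNorm φ 2 volume ∧
    eLpNorm (y₂ ψ z) 2 volume ≤ ENNReal.ofReal (2 / |z.im|) * eLpNorm ψ 2 volume := by
  have hφ : Integrable φ := memLp_one_iff_integrable.1 hφ1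
  have hψ : Integrable ψ := memLp_one_iff_integrable.1 hψ1
  have hz' : (-z).im ≠ 0 := by simpa using hz
  have habs : |(-z).im| = |z.im| := by simp
  rw [y₂_eq_y₁_neg ψ hz, show -I * z = I * -z by ring]
  refine ⟨⟨fun h x ↦ ⟨?_, ?_⟩, fun h x ↦ ⟨?_, ?_⟩⟩, norm_y₁_le hφ, norm_y₁_le hψ, memLp_y₁ hz hφ2,
    memLp_y₁ hz' hψ2, eLpNorm_y₁_le hz hφ2.1, habs ▸ eLpNorm_y₁_le hz' hψ2.1⟩
  · exact integrableOn_exp_I_mul_sub_mul hφ measurableSet_Iic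
      fun s hs ↦ mul_nonneg h.le (sub_nonneg.2 hs)
  · exact integrableOn_exp_I_mul_sub_mul hψ measurableSet_Ici fun s hs ↦
      mul_nonneg_of_nonpos_of_nonpos (by simpa using h.le) (sub_nonpos.2 hs)
  · exact integrableOn_exp_I_mul_sub_mul hφ measurableSet_Ici
      fun s hs ↦ mul_nonneg_of_nonpos_of_nonpos h.le (sub_nonpos.2 hs)
  · exact integrableOn_exp_I_mul_sub_mul hψ measurableSet_Iic fun s hs ↦
      mul_nonneg (by simpa using h.le) (sub_nonneg.2 hs)
end

section
/- Suppose φ, ψ ∈ L¹(ℝ). Then for each fixed x ∈ ℝ the maps z ↦ y₁ᶻ(x) and z ↦ y₂ᶻ(x) are analytic on the open upper half-plane and on the open lower half-plane and extend continuously to the closed upper and closed lower half-planes; moreover, for every z ∈ ℝ and every x ∈ ℝ, lim_{ε↓0} y₁^{z+iε}(x) − lim_{ε↓0} y₁^{z−iε}(x) = i·r₁(z)·e^{izx} and lim_{ε↓0} y₂^{z+iε}(x) − lim_{ε↓0} y₂^{z−iε}(x) = i·r₂(z)·e^{−izx}, where r₁(z) = −i ∫_ℝ φ(y) e^{−izy}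 dy and r₂(z) = i ∫_ℝ ψ(y) e^{izy} dy. -/
open MeasureTheory Set Complex Filter Topology

/-- `r₁(z) = −i ∫_ℝ φ(y) e^{−izy} dy`. -/
noncomputable def r₁ (φ : ℝ → ℂ) (z : ℂ) : ℂ :=
  -Complex.I * ∫ y : ℝ, φ y * Complex.exp (-Complex.I * z * (y : ℂ))

/-- `r₂(z) = i ∫_ℝ ψ(y) e^{izy} dy`. -/
noncomputable def r₂ (ψ : ℝ → ℂ) (z : ℂ) : ℂ :=
  Complex.I * ∫ y : ℝ, ψ y * Complex.exp (Complex.I * z * (y : ℂ))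

noncomputable def expTransform {α : Type*} [MeasurableSpace α] (μ : Measure α) (u : α → ℝ)
    (f : α → ℂ) (z : ℂ) : ℂ :=
  ∫ s, cexp (I * z * u s) * f s ∂μ

lemma norm_cexp_I_mul_mul_ofReal (z : ℂ) (t : ℝ) :
    ‖cexp (I * z * t)‖ = Real.exp (-(z.im * t)) := by
  rw [Complex.norm_exp]
  congr 1
  simp [Complex.mul_re, Complex.mul_im]

lemma norm_cexp_I_mul_mul_ofReal_mul_le {z : ℂ} {t : ℝ} (h : 0 ≤ z.im * t) (w : ℂ) :
    ‖cexp (I * z * t) * w‖ ≤ ‖w‖ := by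
  rw [norm_mul, norm_cexp_I_mul_mul_ofReal]
  exact mul_le_of_le_one_left (norm_nonneg w) (Real.exp_le_one_iff.2 (neg_nonpos.2 h))

lemma norm_cexp_I_mul_mul_ofReal_mul_I_mul_le {δ : ℝ} (hδ : 0 < δ) {z : ℂ} (hz : δ ≤ z.im)
    {t : ℝ} (ht : 0 ≤ t) : ‖cexp (I * z * t) * (I * t)‖ ≤ δ⁻¹ := by
  rw [norm_mul, norm_cexp_I_mul_mul_ofReal, norm_mul, norm_I, one_mul, norm_real,
    Real.norm_of_nonneg ht]
  calc Real.exp (-(z.im * t)) * t ≤ Real.exp (-(δ * t)) * t := by gcongr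
    _ = δ⁻¹ * (δ * t * Real.exp (-(δ * t))) := by field_simp
    _ ≤ δ⁻¹ * 1 := by
      gcongr
      exact (Real.mul_exp_neg_le_exp_neg_one _).trans (Real.exp_le_one_iff.2 (by norm_num))
    _ = δ⁻¹ := mul_one _

section ExpTransform

variable {α : Type*} [MeasurableSpace α] {μ : Measure α} {u : α → ℝ} {f : α → ℂ}

lemma aestronglyMeasurable_comp_mul (hu : AEMeasurable u μ) (hf : AEStronglyMeasurable f μ)
    {g : ℝ → ℂ} (hg : Measurable g) : AEStronglyMeasurable (fun s => g (u s) * f s) μ :=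
  (hg.comp_aemeasurable hu).aestronglyMeasurable.mul hf

lemma aestronglyMeasurable_cexp_I_mul_mul_ofReal_mul (hu : AEMeasurable u μ)
    (hf : AEStronglyMeasurable f μ) (z : ℂ) :
    AEStronglyMeasurable (fun s => cexp (I * z * u s) * f s) μ :=
  aestronglyMeasurable_comp_mul hu hf (g := fun t => cexp (I * z * t)) (by fun_prop)

lemma integrable_cexp_I_mul_mul_ofReal_mul (hu : AEMeasurable u μ) (hf : Integrable f μ)
    {z : ℂ} (h : ∀ᵐ s ∂μ, 0 ≤ z.im * u s) :
    Integrable (fun s => cexp (I * z * u s) * f s) μ :=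
  hf.norm.mono' (aestronglyMeasurable_cexp_I_mul_mul_ofReal_mul hu hf.1 z)
    (h.mono fun s hs => norm_cexp_I_mul_mul_ofReal_mul_le hs (f s))

lemma expTransform_eq_comp_neg : expTransform μ u f = expTransform μ (-u) f ∘ Neg.neg := by
  ext z
  simp only [expTransform, Function.comp_apply, Pi.neg_apply, ofReal_neg, mul_neg, neg_mul,
    neg_neg]

theorem continuousOn_expTransform (hu : AEMeasurable u μ) (hf : Integrable f μ)
    (hu₀ : ∀ᵐ s ∂μ, 0 ≤ u s) : ContinuousOn (expTransform μ u f) {z | 0 ≤ z.im} := by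
  refine fun z₀ _ => continuousWithinAt_of_dominated
    (Eventually.of_forall (aestronglyMeasurable_cexp_I_mul_mul_ofReal_mul hu hf.1))
    ?_ hf.norm (ae_of_all _ fun s => by fun_prop)
  filter_upwards [self_mem_nhdsWithin] with z (hz : 0 ≤ z.im)
  filter_upwards [hu₀] with s hs
  exact norm_cexp_I_mul_mul_ofReal_mul_le (mul_nonneg hz hs) (f s)

theorem differentiableOn_expTransform (hu : AEMeasurable u μ) (hf : Integrable f μ)
    (hu₀ : ∀ᵐ s ∂μ, 0 ≤ u s) : DifferentiableOn ℂ (expTransform μ u f) {z | 0 < z.im} := by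
  intro z₀ (hz₀ : 0 < z₀.im)
  set δ := z₀.im / 2 with hδ_def
  have hδ : 0 < δ := half_pos hz₀
  have him : ∀ z ∈ Metric.ball z₀ δ, δ ≤ z.im := fun z hz => by
    have := (abs_im_le_norm (z - z₀)).trans (mem_ball_iff_norm.1 hz).le
    rw [sub_im] at this
    linarith [neg_abs_le (z.im - z₀.im)]
  have hderiv : ∀ s z, HasDerivAt (fun w => cexp (I * w * u s) * f s)
      (cexp (I * z * u s) * (I * u s) * f s) z := fun s z => by
    have := ((hasDerivAt_id z).const_mul I).mul_const (u s : ℂ)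
    simpa using (this.cexp.mul_const (f s))
  refine (hasDerivAt_integral_of_dominated_loc_of_deriv_le (Metric.ball_mem_nhds z₀ hδ)
    (Eventually.of_forall (aestronglyMeasurable_cexp_I_mul_mul_ofReal_mul hu hf.1))
    (integrable_cexp_I_mul_mul_ofReal_mul hu hf (hu₀.mono fun s hs => mul_nonneg hz₀.le hs))
    (aestronglyMeasurable_comp_mul hu hf.1 (g := fun t => cexp (I * z₀ * t) * (I * t))
      (by fun_prop))
    ?_ (hf.norm.const_mul δ⁻¹) (ae_of_all _ fun s z _ => hderiv s z)).2.differentiableAt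
    |>.differentiableWithinAt
  filter_upwards [hu₀] with s hs z hz
  rw [norm_mul]
  exact mul_le_mul_of_nonneg_right
    (norm_cexp_I_mul_mul_ofReal_mul_I_mul_le hδ (him z hz) hs) (norm_nonneg _)

theorem analyticOnNhd_expTransform (hu : AEMeasurable u μ) (hf : Integrable f μ)
    (hu₀ : ∀ᵐ s ∂μ, 0 ≤ u s) : AnalyticOnNhd ℂ (expTransform μ u f) {z | 0 < z.im} :=
  (differentiableOn_expTransform hu hf hu₀).analyticOnNhd (isOpen_lt continuous_const continuous_im)

theorem continuousOn_expTransform_of_nonpos (hu : AEMeasurable u μ) (hf : Integrable f μ)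
    (hu₀ : ∀ᵐ s ∂μ, u s ≤ 0) : ContinuousOn (expTransform μ u f) {z | z.im ≤ 0} := by
  rw [expTransform_eq_comp_neg]
  exact (continuousOn_expTransform hu.neg hf (hu₀.mono fun s hs => neg_nonneg.2 hs)).comp
    continuous_neg.continuousOn fun z (hz : z.im ≤ 0) => show 0 ≤ (-z).im by simpa using hz

theorem analyticOnNhd_expTransform_of_nonpos (hu : AEMeasurable u μ) (hf : Integrable f μ)
    (hu₀ : ∀ᵐ s ∂μ, u s ≤ 0) : AnalyticOnNhd ℂ (expTransform μ u f) {z | z.im < 0} := by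
  rw [expTransform_eq_comp_neg]
  exact (analyticOnNhd_expTransform hu.neg hf (hu₀.mono fun s hs => neg_nonneg.2 hs)).comp
    analyticOnNhd_id.neg fun z (hz : z.im < 0) => show 0 < (-z).im by simpa using hz

end ExpTransform

lemma expTransform_restrict_Iic_add_Ici {u : ℝ → ℝ} {f : ℝ → ℂ} (hu : AEMeasurable u)
    (hf : Integrable f) (a z : ℝ) :
    expTransform (volume.restrict (Iic a)) u f z + expTransform (volume.restrict (Ici a)) u f z =
      expTransform volume u f z := by
  have hint := integrable_cexp_I_mul_mul_ofReal_mul hu hf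
    (z := z) (ae_of_all _ fun s => by simp)
  simp only [expTransform]
  rw [integral_Iic_eq_integral_Iio]
  exact intervalIntegral.integral_Iio_add_Ici hint.integrableOn hint.integrableOn

lemma expTransform_sub_left (φ : ℝ → ℂ) (x : ℝ) (z : ℂ) :
    expTransform volume (fun s => x - s) φ z = I * r₁ φ z * cexp (I * z * x) := by
  have h : ∀ s : ℝ, cexp (I * z * ↑(x - s)) * φ s =
      φ s * cexp (-I * z * s) * cexp (I * z * x) := fun s => by
    rw [mul_assoc (φ s), ← Complex.exp_add, mul_comm (cexp _) (φ s)]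
    push_cast
    ring_nf
  simp only [expTransform, h, integral_mul_const, r₁, ← mul_assoc, mul_neg, neg_mul, I_mul_I,
    neg_neg, one_mul]

lemma expTransform_sub_right (ψ : ℝ → ℂ) (x : ℝ) (z : ℂ) :
    expTransform volume (fun s => s - x) ψ z = -(I * r₂ ψ z * cexp (-I * z * x)) := by
  have h : ∀ s : ℝ, cexp (I * z * ↑(s - x)) * ψ s =
      ψ s * cexp (I * z * s) * cexp (-I * z * x) := fun s => by
    rw [mul_assoc (ψ s), ← Complex.exp_add, mul_comm (cexp _) (ψ s)]
    push_cast
    ring_nf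
  simp only [expTransform, h, integral_mul_const, r₂, ← mul_assoc, I_mul_I, neg_mul, one_mul,
    neg_neg]

structure HalfPlaneExtensions (Y P M : ℂ → ℂ) : Prop where
  analyticOnNhd_upper : AnalyticOnNhd ℂ P {z | 0 < z.im}
  continuousOn_upper : ContinuousOn P {z | 0 ≤ z.im}
  eqOn_upper : EqOn Y P {z | 0 < z.im}
  analyticOnNhd_lower : AnalyticOnNhd ℂ M {z | z.im < 0}
  continuousOn_lower : ContinuousOn M {z | z.im ≤ 0}
  eqOn_lower : EqOn Y M {z | z.im < 0}

namespace HalfPlaneExtensions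

variable {Y P M : ℂ → ℂ}

theorem analyticOnNhd_upperHalfPlane (h : HalfPlaneExtensions Y P M) :
    AnalyticOnNhd ℂ Y {z | 0 < z.im} :=
  h.analyticOnNhd_upper.congr (isOpen_lt continuous_const continuous_im) h.eqOn_upper.symm

theorem analyticOnNhd_lowerHalfPlane (h : HalfPlaneExtensions Y P M) :
    AnalyticOnNhd ℂ Y {z | z.im < 0} :=
  h.analyticOnNhd_lower.congr (isOpen_lt continuous_im continuous_const) h.eqOn_lower.symm

theorem exists_continuousOn_upper (h : HalfPlaneExtensions Y P M) :
    ∃ F : ℂ → ℂ, ContinuousOn F {z | 0 ≤ z.im} ∧ ∀ z : ℂ, 0 < z.im → F z = Y z :=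
  ⟨P, h.continuousOn_upper, fun _ hz => (h.eqOn_upper hz).symm⟩

theorem exists_continuousOn_lower (h : HalfPlaneExtensions Y P M) :
    ∃ F : ℂ → ℂ, ContinuousOn F {z | z.im ≤ 0} ∧ ∀ z : ℂ, z.im < 0 → F z = Y z :=
  ⟨M, h.continuousOn_lower, fun _ hz => (h.eqOn_lower hz).symm⟩

theorem tendsto_add_mul_I (h : HalfPlaneExtensions Y P M) (x : ℝ) :
    Tendsto (fun ε : ℝ => Y (x + ε * I)) (𝓝[>] 0) (𝓝 (P x)) := by
  have hpath : Tendsto (fun ε : ℝ => (x : ℂ) + ε * I) (𝓝[>] 0) (𝓝[{z | 0 ≤ z.im}] x) := by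
    refine tendsto_nhdsWithin_iff.2 ⟨?_, eventually_nhdsWithin_of_forall fun ε hε => ?_⟩
    · simpa using ((by fun_prop : Continuous fun ε : ℝ => (x : ℂ) + ε * I).tendsto 0).mono_left
        nhdsWithin_le_nhds
    · simpa using le_of_lt hε
  refine ((h.continuousOn_upper x (by simp)).tendsto.comp hpath).congr' ?_
  filter_upwards [self_mem_nhdsWithin] with ε (hε : 0 < ε)
  exact (h.eqOn_upper (show 0 < ((x : ℂ) + ε * I).im by simpa using hε)).symm

theorem tendsto_sub_mul_I (h : HalfPlaneExtensions Y P M) (x : ℝ) :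
    Tendsto (fun ε : ℝ => Y (x - ε * I)) (𝓝[>] 0) (𝓝 (M x)) := by
  have hpath : Tendsto (fun ε : ℝ => (x : ℂ) - ε * I) (𝓝[>] 0) (𝓝[{z | z.im ≤ 0}] x) := by
    refine tendsto_nhdsWithin_iff.2 ⟨?_, eventually_nhdsWithin_of_forall fun ε hε => ?_⟩
    · simpa using ((by fun_prop : Continuous fun ε : ℝ => (x : ℂ) - ε * I).tendsto 0).mono_left
        nhdsWithin_le_nhds
    · simpa using le_of_lt hε
  refine ((h.continuousOn_lower x (by simp)).tendsto.comp hpath).congr' ?_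
  filter_upwards [self_mem_nhdsWithin] with ε (hε : 0 < ε)
  exact (h.eqOn_lower (show ((x : ℂ) - ε * I).im < 0 by simpa using hε)).symm

end HalfPlaneExtensions

lemma halfPlaneExtensions_y₁ {φ : ℝ → ℂ} (hφ : Integrable φ) (x : ℝ) :
    HalfPlaneExtensions (fun z => y₁ φ z x)
      (expTransform (volume.restrict (Iic x)) (fun s => x - s) φ)
      (-expTransform (volume.restrict (Ici x)) (fun s => x - s) φ) := by
  have hu : Measurable fun s : ℝ => x - s := measurable_const.sub measurable_id
  have hIic : ∀ᵐ s ∂volume.restrict (Iic x), 0 ≤ x - s :=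
    (ae_restrict_mem measurableSet_Iic).mono fun s hs => sub_nonneg.2 hs
  have hIci : ∀ᵐ s ∂volume.restrict (Ici x), x - s ≤ 0 :=
    (ae_restrict_mem measurableSet_Ici).mono fun s hs => sub_nonpos.2 hs
  refine ⟨analyticOnNhd_expTransform hu.aemeasurable hφ.restrict hIic,
    continuousOn_expTransform hu.aemeasurable hφ.restrict hIic,
    fun z (hz : 0 < z.im) => by simp only [y₁, if_pos hz]; rfl,
    (analyticOnNhd_expTransform_of_nonpos hu.aemeasurable hφ.restrict hIci).neg,
    (continuousOn_expTransform_of_nonpos hu.aemeasurable hφ.restrict hIci).neg,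
    fun z (hz : z.im < 0) => by simp only [y₁, if_neg hz.not_gt]; rfl⟩

lemma halfPlaneExtensions_y₂ {ψ : ℝ → ℂ} (hψ : Integrable ψ) (x : ℝ) :
    HalfPlaneExtensions (fun z => y₂ ψ z x)
      (-expTransform (volume.restrict (Ici x)) (fun s => s - x) ψ)
      (expTransform (volume.restrict (Iic x)) (fun s => s - x) ψ) := by
  have hu : Measurable fun s : ℝ => s - x := measurable_id.sub measurable_const
  have hIci : ∀ᵐ s ∂volume.restrict (Ici x), 0 ≤ s - x :=
    (ae_restrict_mem measurableSet_Ici).mono fun s hs => sub_nonneg.2 hs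
  have hIic : ∀ᵐ s ∂volume.restrict (Iic x), s - x ≤ 0 :=
    (ae_restrict_mem measurableSet_Iic).mono fun s hs => sub_nonpos.2 hs
  have hkernel : ∀ (z : ℂ) (s : ℝ),
      cexp (-I * z * ((x - s : ℝ) : ℂ)) = cexp (I * z * ((s - x : ℝ) : ℂ)) := fun z s => by
    push_cast
    ring_nf
  refine ⟨(analyticOnNhd_expTransform hu.aemeasurable hψ.restrict hIci).neg,
    (continuousOn_expTransform hu.aemeasurable hψ.restrict hIci).neg,
    fun z (hz : 0 < z.im) => by simp only [y₂, if_pos hz, hkernel]; rfl,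
    analyticOnNhd_expTransform_of_nonpos hu.aemeasurable hψ.restrict hIic,
    continuousOn_expTransform_of_nonpos hu.aemeasurable hψ.restrict hIic,
    fun z (hz : z.im < 0) => by simp only [y₂, if_neg hz.not_gt, hkernel]; rfl⟩

/-- for `φ, ψ ∈ L¹(ℝ)` and fixed `x ∈ ℝ`, the maps `z ↦ y₁ᶻ(x)`, `z ↦ y₂ᶻ(x)`
are analytic on the open upper and lower half-planes, extend continuously to the closed upper
and lower half-planes, and across the real axis they jump by `i·r₁(z)·e^{izx}` and
`i·r₂(z)·e^{−izx}` respectively. -/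
theorem statement_1 (φ ψ : ℝ → ℂ)
    (hφ : Integrable φ volume) (hψ : Integrable ψ volume) (x : ℝ) :
    AnalyticOnNhd ℂ (fun z => y₁ φ z x) {z : ℂ | 0 < z.im} ∧
    AnalyticOnNhd ℂ (fun z => y₁ φ z x) {z : ℂ | z.im < 0} ∧
    AnalyticOnNhd ℂ (fun z => y₂ ψ z x) {z : ℂ | 0 < z.im} ∧
    AnalyticOnNhd ℂ (fun z => y₂ ψ z x) {z : ℂ | z.im < 0} ∧
    (∃ F : ℂ → ℂ, ContinuousOn F {z : ℂ | 0 ≤ z.im} ∧ ∀ z : ℂ, 0 < z.im → F z = y₁ φ z x) ∧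
    (∃ F : ℂ → ℂ, ContinuousOn F {z : ℂ | z.im ≤ 0} ∧ ∀ z : ℂ, z.im < 0 → F z = y₁ φ z x) ∧
    (∃ F : ℂ → ℂ, ContinuousOn F {z : ℂ | 0 ≤ z.im} ∧ ∀ z : ℂ, 0 < z.im → F z = y₂ ψ z x) ∧
    (∃ F : ℂ → ℂ, ContinuousOn F {z : ℂ | z.im ≤ 0} ∧ ∀ z : ℂ, z.im < 0 → F z = y₂ ψ z x) ∧
    (∀ z : ℝ, ∃ Lp Lm : ℂ,
      Tendsto (fun ε : ℝ => y₁ φ ((z : ℂ) + (ε : ℂ) * Complex.I) x) (𝓝[>] 0) (𝓝 Lp) ∧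
      Tendsto (fun ε : ℝ => y₁ φ ((z : ℂ) - (ε : ℂ) * Complex.I) x) (𝓝[>] 0) (𝓝 Lm) ∧
      Lp - Lm = Complex.I * r₁ φ (z : ℂ) * Complex.exp (Complex.I * (z : ℂ) * (x : ℂ))) ∧
    (∀ z : ℝ, ∃ Lp Lm : ℂ,
      Tendsto (fun ε : ℝ => y₂ ψ ((z : ℂ) + (ε : ℂ) * Complex.I) x) (𝓝[>] 0) (𝓝 Lp) ∧
      Tendsto (fun ε : ℝ => y₂ ψ ((z : ℂ) - (ε : ℂ) * Complex.I) x) (𝓝[>] 0) (𝓝 Lm) ∧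
      Lp - Lm = Complex.I * r₂ ψ (z : ℂ) * Complex.exp (-Complex.I * (z : ℂ) * (x : ℂ))) := by
  have h₁ := halfPlaneExtensions_y₁ hφ x
  have h₂ := halfPlaneExtensions_y₂ hψ x
  refine ⟨h₁.analyticOnNhd_upperHalfPlane, h₁.analyticOnNhd_lowerHalfPlane,
    h₂.analyticOnNhd_upperHalfPlane, h₂.analyticOnNhd_lowerHalfPlane,
    h₁.exists_continuousOn_upper, h₁.exists_continuousOn_lower,
    h₂.exists_continuousOn_upper, h₂.exists_continuousOn_lower,
    fun z => ⟨_, _, h₁.tendsto_add_mul_I z, h₁.tendsto_sub_mul_I z, ?_⟩,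
    fun z => ⟨_, _, h₂.tendsto_add_mul_I z, h₂.tendsto_sub_mul_I z, ?_⟩⟩
  · rw [Pi.neg_apply, sub_neg_eq_add, expTransform_restrict_Iic_add_Ici
      (u := fun s => x - s) (by fun_prop) hφ, expTransform_sub_left]
  · rw [Pi.neg_apply, ← neg_add', add_comm, expTransform_restrict_Iic_add_Ici
      (u := fun s => s - x) (by fun_prop) hψ, expTransform_sub_right, neg_neg]
end

section
/- Suppose φ, ψ ∈ L¹∘(0,∞). Then for each fixed x > 0 the maps z ↦ y₁ᶻ(x) and z ↦ y₂ᶻ(x) are analytic on each of the open half-planes {Re z < 1/2} and {Re z > 1/2} and extend continuously to their closures; moreover, for every z with Re z = 1/2 and every x > 0, lim_{ε↓0} y₁^{z−ε}(x) − lim_{ε↓0} y₁^{z+ε}(x) = −x^{−z}·r₁(z) and lim_{ε↓0} y₂^{z−ε}(x) − lim_{ε↓0} y₂^{z+ε}(x) = x^{z−1}·r₂(z), where r₁(z) = ∫_0^∞ y^{z−1} φ(y) dy and r₂(z) = ∫_0^∞ y^{−z} ψ(y) dy. -/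
/-!
With `w = -z` for `y₁` and `w = z - 1` for `y₂`, both functions are, on either side of the
critical line, `±` one of the integrals `∫_{s>x} (x/s)^w f(s) ds/s` and
`∫_{0<s<x} (x/s)^w f(s) ds/s`.
On `s > x` (resp. `s < x`) the modulus `(x/s)^{Re w}` is at most `(x/s)^{-1/2}` as soon as
`Re w ≥ -1/2` (resp. `≤ -1/2`), and `(x/s)^{-1/2} |f(s)|/s = x^{-1/2} |f(s)| s^{-1/2}` is integrable
because `f ∈ L¹∘`. Dominated convergence then gives continuity up to the line, and differentiation
under the integral sign gives holomorphy off it, the factor `log(x/s)` of the derivative being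
absorbed through `δ |log t| ≤ t^δ + t^{-δ}`. On the line both integrals converge, and their sum is
`x^w` times the Mellin transform `∫_0^∞ s^{-w-1} f(s) ds`: this is the jump.
-/

open MeasureTheory Set Complex Filter Topology

/-- `f ∈ L¹∘(0,∞)`: `∫_0^∞ |f(x)| x^{−1/2} dx < ∞`. -/
def MemL1c (f : ℝ → ℂ) : Prop :=
  IntegrableOn (fun x => f x / ((Real.sqrt x : ℝ) : ℂ)) (Ioi 0) volume

/-- `y₁ᶻ(x)`: for `Re z < 1/2`, `−∫_x^∞ (x/s)^{−z} φ(s) ds/s`;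
for `Re z > 1/2`, `∫_0^x (x/s)^{−z} φ(s) ds/s`. -/
noncomputable def Y₁ (φ : ℝ → ℂ) (z : ℂ) (x : ℝ) : ℂ :=
  if z.re < 1/2 then -∫ s in Ioi x, ((x / s : ℝ) : ℂ) ^ (-z) * φ s / (s : ℂ)
  else ∫ s in Ioo 0 x, ((x / s : ℝ) : ℂ) ^ (-z) * φ s / (s : ℂ)

/-- `y₂ᶻ(x)`: for `Re z < 1/2`, `∫_0^x (x/s)^{z−1} ψ(s) ds/s`;
for `Re z > 1/2`, `−∫_x^∞ (x/s)^{z−1} ψ(s) ds/s`. -/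
noncomputable def Y₂ (ψ : ℝ → ℂ) (z : ℂ) (x : ℝ) : ℂ :=
  if z.re < 1/2 then ∫ s in Ioo 0 x, ((x / s : ℝ) : ℂ) ^ (z - 1) * ψ s / (s : ℂ)
  else -∫ s in Ioi x, ((x / s : ℝ) : ℂ) ^ (z - 1) * ψ s / (s : ℂ)

/-- Mellin transform `r₁(z) = ∫_0^∞ y^{z−1} φ(y) dy`. -/
noncomputable def mr₁ (φ : ℝ → ℂ) (z : ℂ) : ℂ :=
  ∫ y in Ioi (0:ℝ), (y : ℂ) ^ (z - 1) * φ y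

/-- Mellin transform `r₂(z) = ∫_0^∞ y^{−z} ψ(y) dy`. -/
noncomputable def mr₂ (ψ : ℝ → ℂ) (z : ℂ) : ℂ :=
  ∫ y in Ioi (0:ℝ), (y : ℂ) ^ (-z) * ψ y

section Kernel

variable {f : ℝ → ℂ} {x : ℝ} {A : Set ℝ}

lemma mul_abs_log_le_rpow_add_rpow_neg {t δ : ℝ} (ht : 0 < t) (hδ : 0 ≤ δ) :
    δ * |Real.log t| ≤ t ^ δ + t ^ (-δ) := by
  rw [Real.rpow_def_of_pos ht, Real.rpow_def_of_pos ht, ← abs_of_nonneg hδ, ← abs_mul,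
    abs_of_nonneg hδ]
  rw [abs_le]
  constructor <;> nlinarith [Real.add_one_le_exp (Real.log t * δ),
    Real.add_one_le_exp (Real.log t * -δ), Real.exp_pos (Real.log t * δ),
    Real.exp_pos (Real.log t * -δ)]

lemma rpow_mul_abs_log_le {t b δ c : ℝ} (ht : 0 < t) (hδ : 0 < δ) (hpos : t ^ (b + δ) ≤ c)
    (hneg : t ^ (b - δ) ≤ c) : t ^ b * |Real.log t| ≤ 2 * δ⁻¹ * c := by
  calc t ^ b * |Real.log t| = δ⁻¹ * (t ^ b * (δ * |Real.log t|)) := by field_simp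
    _ ≤ δ⁻¹ * (t ^ b * (t ^ δ + t ^ (-δ))) := by
        gcongr
        exact mul_abs_log_le_rpow_add_rpow_neg ht hδ.le
    _ = δ⁻¹ * (t ^ (b + δ) + t ^ (b - δ)) := by
        rw [mul_add, ← Real.rpow_add ht, ← Real.rpow_add ht, sub_eq_add_neg]
    _ ≤ 2 * δ⁻¹ * c := by
        rw [mul_comm 2, mul_assoc]
        gcongr
        linarith

lemma MemL1c.aestronglyMeasurable (hf : MemL1c f) (hA : A ⊆ Ioi 0) :
    AEStronglyMeasurable f (volume.restrict A) := by
  have hsqrt : AEStronglyMeasurable (fun s : ℝ => ((√s : ℝ) : ℂ)) (volume.restrict (Ioi 0)) :=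
    (by fun_prop : Continuous fun s : ℝ => ((√s : ℝ) : ℂ)).aestronglyMeasurable
  refine (((Integrable.aestronglyMeasurable hf).mul hsqrt).congr ?_).mono_measure
    (Measure.restrict_mono hA le_rfl)
  filter_upwards [ae_restrict_mem measurableSet_Ioi] with s (hs : 0 < s)
  exact div_mul_cancel₀ _ (by exact_mod_cast (Real.sqrt_pos.2 hs).ne')

lemma MemL1c.integrableOn_rpow_neg_half_mul_norm_div (hf : MemL1c f) (hx : 0 < x)
    (hAm : MeasurableSet A) (hA : A ⊆ Ioi 0) :
    IntegrableOn (fun s => (x / s) ^ (-(1/2) : ℝ) * ‖f s‖ / s) A := by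
  refine IntegrableOn.congr_fun ((IntegrableOn.mono_set hf.norm hA).const_mul (√x)⁻¹)
    (fun s hs => ?_) hAm
  have hs : 0 < s := hA hs
  have : √s ≠ 0 := by positivity
  have : √x ≠ 0 := by positivity
  rw [Real.rpow_neg (by positivity), ← Real.sqrt_eq_rpow, Real.sqrt_div hx.le, norm_div,
    Complex.norm_real, Real.norm_of_nonneg (Real.sqrt_nonneg s)]
  field_simp
  rw [Real.sq_sqrt hs.le]

lemma norm_cpow_mul_div (hx : 0 < x) {s : ℝ} (hs : 0 < s) (w : ℂ) :
    ‖((x / s : ℝ) : ℂ) ^ w * f s / (s : ℂ)‖ = (x / s) ^ w.re * ‖f s‖ / s := by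
  rw [norm_div, norm_mul, Complex.norm_cpow_eq_rpow_re_of_pos (by positivity), Complex.norm_real,
    Real.norm_of_nonneg hs.le]

lemma norm_cpow_mul_log_mul_div (hx : 0 < x) {s : ℝ} (hs : 0 < s) (w : ℂ) :
    ‖((x / s : ℝ) : ℂ) ^ w * Complex.log ((x / s : ℝ) : ℂ) * (f s / (s : ℂ))‖
      = (x / s) ^ w.re * |Real.log (x / s)| * (‖f s‖ / s) := by
  rw [norm_mul, norm_mul, norm_div, Complex.norm_cpow_eq_rpow_re_of_pos (by positivity),
    ← Complex.ofReal_log (by positivity), Complex.norm_real, Complex.norm_real,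
    Real.norm_eq_abs, Real.norm_of_nonneg hs.le]

lemma aestronglyMeasurable_mul_div (hf : MemL1c f) (hA : A ⊆ Ioi 0) {k : ℝ → ℂ}
    (hk : Measurable k) :
    AEStronglyMeasurable (fun s => k s * (f s / (s : ℂ))) (volume.restrict A) :=
  hk.aestronglyMeasurable.mul ((hf.aestronglyMeasurable hA).mul
    (by fun_prop : Measurable fun s : ℝ => (s : ℂ)⁻¹).aestronglyMeasurable)

lemma aestronglyMeasurable_cpow_mul_div (hf : MemL1c f) (hA : A ⊆ Ioi 0) (x : ℝ) (w : ℂ) :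
    AEStronglyMeasurable (fun s => ((x / s : ℝ) : ℂ) ^ w * f s / (s : ℂ)) (volume.restrict A) := by
  simp only [mul_div_assoc]
  exact aestronglyMeasurable_mul_div hf hA (by fun_prop)

lemma integrableOn_cpow_mul_div (hf : MemL1c f) (hx : 0 < x) (hAm : MeasurableSet A)
    (hA : A ⊆ Ioi 0) {w : ℂ} (hw : ∀ s ∈ A, (x / s) ^ w.re ≤ (x / s) ^ (-(1/2) : ℝ)) :
    IntegrableOn (fun s => ((x / s : ℝ) : ℂ) ^ w * f s / (s : ℂ)) A := by
  refine (hf.integrableOn_rpow_neg_half_mul_norm_div hx hAm hA).mono'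
    (aestronglyMeasurable_cpow_mul_div hf hA x w) (ae_restrict_of_forall_mem hAm fun s hs => ?_)
  rw [norm_cpow_mul_div hx (hA hs)]
  exact div_le_div_of_nonneg_right (mul_le_mul_of_nonneg_right (hw s hs) (norm_nonneg _))
    (hA hs).le

lemma tendsto_integral_cpow_mul_div {ι : Type*} {l : Filter ι} [l.IsCountablyGenerated]
    (hf : MemL1c f) (hx : 0 < x) (hAm : MeasurableSet A) (hA : A ⊆ Ioi 0)
    {g : ι → ℂ} {w₀ : ℂ} (hg : Tendsto g l (𝓝 w₀))
    (hb : ∀ᶠ i in l, ∀ s ∈ A, (x / s) ^ (g i).re ≤ (x / s) ^ (-(1/2) : ℝ)) :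
    Tendsto (fun i => ∫ s in A, ((x / s : ℝ) : ℂ) ^ g i * f s / (s : ℂ)) l
      (𝓝 (∫ s in A, ((x / s : ℝ) : ℂ) ^ w₀ * f s / (s : ℂ))) := by
  refine tendsto_integral_filter_of_dominated_convergence _
    (.of_forall fun i => aestronglyMeasurable_cpow_mul_div hf hA x (g i))
    (hb.mono fun i hi => ae_restrict_of_forall_mem hAm fun s hs => ?_)
    (hf.integrableOn_rpow_neg_half_mul_norm_div hx hAm hA)
    (ae_restrict_of_forall_mem hAm fun s hs => ?_)
  · rw [norm_cpow_mul_div hx (hA hs)]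
    exact div_le_div_of_nonneg_right (mul_le_mul_of_nonneg_right (hi s hs) (norm_nonneg _))
      (hA hs).le
  · have hc : ((x / s : ℝ) : ℂ) ≠ 0 := by exact_mod_cast (div_pos hx (hA hs)).ne'
    exact (((continuousAt_const_cpow hc).tendsto.comp hg).mul_const _).div_const _

lemma differentiableAt_integral_cpow_mul_div (hf : MemL1c f) (hx : 0 < x)
    (hAm : MeasurableSet A) (hA : A ⊆ Ioi 0) {w₀ : ℂ} {δ : ℝ} (hδ : 0 < δ)
    (hb : ∀ a ∈ Ioo (w₀.re - 2 * δ) (w₀.re + 2 * δ), ∀ s ∈ A,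
      (x / s) ^ a ≤ (x / s) ^ (-(1/2) : ℝ)) :
    DifferentiableAt ℂ (fun w => ∫ s in A, ((x / s : ℝ) : ℂ) ^ w * f s / (s : ℂ)) w₀ := by
  have hre : ∀ w ∈ Metric.ball w₀ δ, |w.re - w₀.re| < δ := fun w hw => by
    rw [Metric.mem_ball, Complex.dist_eq] at hw
    exact (Complex.abs_re_le_norm _).trans_lt hw
  have hbound : ∀ s ∈ A, ∀ w ∈ Metric.ball w₀ δ,
      ‖((x / s : ℝ) : ℂ) ^ w * Complex.log ((x / s : ℝ) : ℂ) * (f s / (s : ℂ))‖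
        ≤ 2 * δ⁻¹ * ((x / s) ^ (-(1/2) : ℝ) * ‖f s‖ / s) := fun s hs w hw => by
    -- the logarithm is traded for the exponents `Re w ± δ`, which stay within `2δ` of `Re w₀`
    have hclose := abs_lt.1 (hre w hw)
    rw [norm_cpow_mul_log_mul_div hx (hA hs), mul_div_assoc, ← mul_assoc]
    exact mul_le_mul_of_nonneg_right (rpow_mul_abs_log_le (div_pos hx (hA hs)) hδ
      (hb _ ⟨by linarith, by linarith⟩ s hs) (hb _ ⟨by linarith, by linarith⟩ s hs))
      (div_nonneg (norm_nonneg _) (hA hs).le)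
  have hderiv : ∀ s ∈ A, ∀ w ∈ Metric.ball w₀ δ,
      HasDerivAt (fun w => ((x / s : ℝ) : ℂ) ^ w * f s / (s : ℂ))
        (((x / s : ℝ) : ℂ) ^ w * Complex.log ((x / s : ℝ) : ℂ) * (f s / (s : ℂ))) w := by
    intro s hs w _
    have hc : ((x / s : ℝ) : ℂ) ≠ 0 := by exact_mod_cast (div_pos hx (hA hs)).ne'
    simpa only [mul_div_assoc] using
      (hasStrictDerivAt_const_cpow (Or.inl hc)).hasDerivAt.mul_const (f s / (s : ℂ))
  exact (hasDerivAt_integral_of_dominated_loc_of_deriv_le (Metric.ball_mem_nhds w₀ hδ)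
    (.of_forall fun w => aestronglyMeasurable_cpow_mul_div hf hA x w)
    (integrableOn_cpow_mul_div hf hx hAm hA fun s hs =>
      hb _ ⟨by linarith, by linarith⟩ s hs)
    (aestronglyMeasurable_mul_div hf hA (by fun_prop))
    (ae_restrict_of_forall_mem hAm hbound)
    ((hf.integrableOn_rpow_neg_half_mul_norm_div hx hAm hA).const_mul _)
    (ae_restrict_of_forall_mem hAm hderiv)).2.differentiableAt

end Kernel

noncomputable def kernelIntegralIoi (f : ℝ → ℂ) (x : ℝ) (w : ℂ) : ℂ :=
  ∫ s in Ioi x, ((x / s : ℝ) : ℂ) ^ w * f s / (s : ℂ)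

noncomputable def kernelIntegralIoo (f : ℝ → ℂ) (x : ℝ) (w : ℂ) : ℂ :=
  ∫ s in Ioo 0 x, ((x / s : ℝ) : ℂ) ^ w * f s / (s : ℂ)

section KernelIntegrals

variable {f : ℝ → ℂ} {x : ℝ}

lemma rpow_div_le_rpow_neg_half_of_lt {s a : ℝ} (hx : 0 < x) (hs : x < s) (ha : -(1/2) ≤ a) :
    (x / s) ^ a ≤ (x / s) ^ (-(1/2) : ℝ) :=
  Real.rpow_le_rpow_of_exponent_ge (div_pos hx (hx.trans hs))
    ((div_le_one (hx.trans hs)).2 hs.le) ha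

lemma rpow_div_le_rpow_neg_half_of_gt {s a : ℝ} (hs : 0 < s) (hsx : s < x) (ha : a ≤ -(1/2)) :
    (x / s) ^ a ≤ (x / s) ^ (-(1/2) : ℝ) :=
  Real.rpow_le_rpow_of_exponent_le ((one_le_div hs).2 hsx.le) ha

lemma continuousOn_kernelIntegralIoi (hf : MemL1c f) (hx : 0 < x) :
    ContinuousOn (kernelIntegralIoi f x) {w : ℂ | -(1/2) ≤ w.re} := fun _ _ =>
  tendsto_integral_cpow_mul_div hf hx measurableSet_Ioi (Ioi_subset_Ioi hx.le)
    (tendsto_id.mono_left nhdsWithin_le_nhds)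
    (eventually_nhdsWithin_of_forall fun _ hw _ hs => rpow_div_le_rpow_neg_half_of_lt hx hs hw)

lemma continuousOn_kernelIntegralIoo (hf : MemL1c f) (hx : 0 < x) :
    ContinuousOn (kernelIntegralIoo f x) {w : ℂ | w.re ≤ -(1/2)} := fun _ _ =>
  tendsto_integral_cpow_mul_div hf hx measurableSet_Ioo Ioo_subset_Ioi_self
    (tendsto_id.mono_left nhdsWithin_le_nhds)
    (eventually_nhdsWithin_of_forall fun _ hw _ hs =>
      rpow_div_le_rpow_neg_half_of_gt hs.1 hs.2 hw)

lemma differentiableOn_kernelIntegralIoi (hf : MemL1c f) (hx : 0 < x) :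
    DifferentiableOn ℂ (kernelIntegralIoi f x) {w : ℂ | -(1/2) < w.re} := fun w₀ hw₀ =>
  (differentiableAt_integral_cpow_mul_div hf hx measurableSet_Ioi (Ioi_subset_Ioi hx.le)
    (δ := (w₀.re + 1/2) / 4) (by linarith [show -(1/2) < w₀.re from hw₀])
    fun _ ha _ hs => rpow_div_le_rpow_neg_half_of_lt hx hs
      (by linarith [ha.1, show -(1/2) < w₀.re from hw₀])).differentiableWithinAt

lemma differentiableOn_kernelIntegralIoo (hf : MemL1c f) (hx : 0 < x) :
    DifferentiableOn ℂ (kernelIntegralIoo f x) {w : ℂ | w.re < -(1/2)} := fun w₀ hw₀ =>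
  (differentiableAt_integral_cpow_mul_div hf hx measurableSet_Ioo Ioo_subset_Ioi_self
    (δ := (-(1/2) - w₀.re) / 4) (by linarith [show w₀.re < -(1/2) from hw₀])
    fun _ ha _ hs => rpow_div_le_rpow_neg_half_of_gt hs.1 hs.2
      (by linarith [ha.2, show w₀.re < -(1/2) from hw₀])).differentiableWithinAt

lemma cpow_div_mul_div_eq {s : ℝ} (hx : 0 ≤ x) (hs : 0 < s) (w c : ℂ) :
    ((x / s : ℝ) : ℂ) ^ w * c / (s : ℂ) = (x : ℂ) ^ w * ((s : ℂ) ^ (-w - 1) * c) := by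
  have hs' : (s : ℂ) ≠ 0 := by exact_mod_cast hs.ne'
  have hsw : (s : ℂ) ^ w ≠ 0 := by simp [Complex.cpow_eq_zero_iff, hs']
  rw [Complex.ofReal_div, div_cpow_ofReal_nonneg hx hs.le, Complex.cpow_sub _ _ hs',
    Complex.cpow_neg, Complex.cpow_one]
  field_simp

lemma kernelIntegralIoi_add_kernelIntegralIoo (hf : MemL1c f) (hx : 0 < x) {w : ℂ}
    (hw : w.re = -(1/2)) :
    kernelIntegralIoi f x w + kernelIntegralIoo f x w
      = (x : ℂ) ^ w * ∫ s in Ioi (0 : ℝ), (s : ℂ) ^ (-w - 1) * f s := by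
  have hIoi := integrableOn_cpow_mul_div hf hx measurableSet_Ioi (Ioi_subset_Ioi hx.le)
    fun s hs => rpow_div_le_rpow_neg_half_of_lt hx hs hw.ge
  have hIoo := integrableOn_cpow_mul_div hf hx measurableSet_Ioo Ioo_subset_Ioi_self
    fun s hs => rpow_div_le_rpow_neg_half_of_gt hs.1 hs.2 hw.le
  rw [← integral_const_mul, ← setIntegral_congr_fun measurableSet_Ioi
    fun s (hs : 0 < s) => cpow_div_mul_div_eq hx.le hs w (f s), ← Ioo_union_Ici_eq_Ioi hx,
    setIntegral_union ((Iio_disjoint_Ici le_rfl).mono_left Ioo_subset_Iio_self)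
      measurableSet_Ici hIoo ((integrableOn_Ici_iff_integrableOn_Ioi).2 hIoi),
    integral_Ici_eq_integral_Ioi, add_comm]
  rfl

lemma kernelIntegralIoi_add_kernelIntegralIoo_neg (hf : MemL1c f) (hx : 0 < x) {z : ℂ}
    (hz : z.re = 1/2) :
    kernelIntegralIoi f x (-z) + kernelIntegralIoo f x (-z) = (x : ℂ) ^ (-z) * mr₁ f z := by
  rw [kernelIntegralIoi_add_kernelIntegralIoo hf hx (by simp [hz]), mr₁, neg_neg]

lemma kernelIntegralIoi_add_kernelIntegralIoo_sub_one (hf : MemL1c f) (hx : 0 < x) {z : ℂ}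
    (hz : z.re = 1/2) :
    kernelIntegralIoi f x (z - 1) + kernelIntegralIoo f x (z - 1)
      = (x : ℂ) ^ (z - 1) * mr₂ f z := by
  rw [kernelIntegralIoi_add_kernelIntegralIoo hf hx (by simp [hz]; norm_num), mr₂,
    neg_sub, sub_sub_cancel_left]

end KernelIntegrals

structure IsLeftBranch (c : ℝ) (Y F : ℂ → ℂ) : Prop where
  continuousOn : ContinuousOn F {z : ℂ | z.re ≤ c}
  differentiableOn : DifferentiableOn ℂ F {z : ℂ | z.re < c}
  eqOn : EqOn F Y {z : ℂ | z.re < c}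

structure IsRightBranch (c : ℝ) (Y F : ℂ → ℂ) : Prop where
  continuousOn : ContinuousOn F {z : ℂ | c ≤ z.re}
  differentiableOn : DifferentiableOn ℂ F {z : ℂ | c < z.re}
  eqOn : EqOn F Y {z : ℂ | c < z.re}

section Branches

variable {c : ℝ} {Y F : ℂ → ℂ}

lemma IsLeftBranch.analyticOnNhd (h : IsLeftBranch c Y F) : AnalyticOnNhd ℂ Y {z : ℂ | z.re < c} :=
  (h.differentiableOn.congr fun _ hz => (h.eqOn hz).symm).analyticOnNhd
    (isOpen_lt Complex.continuous_re continuous_const)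

lemma IsRightBranch.analyticOnNhd (h : IsRightBranch c Y F) :
    AnalyticOnNhd ℂ Y {z : ℂ | c < z.re} :=
  (h.differentiableOn.congr fun _ hz => (h.eqOn hz).symm).analyticOnNhd
    (isOpen_lt continuous_const Complex.continuous_re)

lemma IsLeftBranch.tendsto_sub (h : IsLeftBranch c Y F) {z : ℂ} (hz : z.re = c) :
    Tendsto (fun ε : ℝ => Y (z - ε)) (𝓝[>] 0) (𝓝 (F z)) := by
  have hpath : Tendsto (fun ε : ℝ => z - ε) (𝓝[>] 0) (𝓝[{w : ℂ | w.re < c}] z) :=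
    tendsto_nhdsWithin_iff.2
      ⟨((by fun_prop : Continuous fun ε : ℝ => z - ε).tendsto' 0 z (by simp)).mono_left
        nhdsWithin_le_nhds, eventually_nhdsWithin_of_forall fun ε (hε : 0 < ε) => by simp [hz, hε]⟩
  have hF : Tendsto F (𝓝[{w : ℂ | w.re < c}] z) (𝓝 (F z)) :=
    ((h.continuousOn z hz.le).mono fun _ (hw : _ < c) => hw.le).tendsto
  exact (hF.comp hpath).congr' ((hpath.eventually self_mem_nhdsWithin).mono fun _ hε => h.eqOn hε)

lemma IsRightBranch.tendsto_add (h : IsRightBranch c Y F) {z : ℂ} (hz : z.re = c) :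
    Tendsto (fun ε : ℝ => Y (z + ε)) (𝓝[>] 0) (𝓝 (F z)) := by
  have hpath : Tendsto (fun ε : ℝ => z + ε) (𝓝[>] 0) (𝓝[{w : ℂ | c < w.re}] z) :=
    tendsto_nhdsWithin_iff.2
      ⟨((by fun_prop : Continuous fun ε : ℝ => z + ε).tendsto' 0 z (by simp)).mono_left
        nhdsWithin_le_nhds, eventually_nhdsWithin_of_forall fun ε (hε : 0 < ε) => by simp [hz, hε]⟩
  have hF : Tendsto F (𝓝[{w : ℂ | c < w.re}] z) (𝓝 (F z)) :=
    ((h.continuousOn z hz.ge).mono fun _ (hw : c < _) => hw.le).tendsto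
  exact (hF.comp hpath).congr' ((hpath.eventually self_mem_nhdsWithin).mono fun _ hε => h.eqOn hε)

end Branches

section Solutions

variable {f : ℝ → ℂ} {x : ℝ}

lemma isLeftBranch_Y₁ (hf : MemL1c f) (hx : 0 < x) :
    IsLeftBranch (1/2) (fun z => Y₁ f z x) (fun z => -kernelIntegralIoi f x (-z)) where
  continuousOn := ((continuousOn_kernelIntegralIoi hf hx).comp continuous_neg.continuousOn
    fun z (hz : z.re ≤ 1/2) => show -(1/2) ≤ (-z).re by simp; linarith).neg
  differentiableOn := ((differentiableOn_kernelIntegralIoi hf hx).comp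
    differentiable_neg.differentiableOn
    fun z (hz : z.re < 1/2) => show -(1/2) < (-z).re by simp; linarith).neg
  eqOn _ hz := (if_pos hz).symm

lemma isRightBranch_Y₁ (hf : MemL1c f) (hx : 0 < x) :
    IsRightBranch (1/2) (fun z => Y₁ f z x) (fun z => kernelIntegralIoo f x (-z)) where
  continuousOn := (continuousOn_kernelIntegralIoo hf hx).comp continuous_neg.continuousOn
    fun z (hz : 1/2 ≤ z.re) => show (-z).re ≤ -(1/2) by simp; linarith
  differentiableOn := (differentiableOn_kernelIntegralIoo hf hx).comp
    differentiable_neg.differentiableOn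
    fun z (hz : 1/2 < z.re) => show (-z).re < -(1/2) by simp; linarith
  eqOn _ hz := (if_neg (lt_asymm hz)).symm

lemma isLeftBranch_Y₂ (hf : MemL1c f) (hx : 0 < x) :
    IsLeftBranch (1/2) (fun z => Y₂ f z x) (fun z => kernelIntegralIoo f x (z - 1)) where
  continuousOn := (continuousOn_kernelIntegralIoo hf hx).comp (continuous_sub_right 1).continuousOn
    fun z (hz : z.re ≤ 1/2) => show (z - 1).re ≤ -(1/2) by simp; linarith
  differentiableOn := (differentiableOn_kernelIntegralIoo hf hx).comp
    (differentiable_id.sub_const 1).differentiableOn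
    fun z (hz : z.re < 1/2) => show (z - 1).re < -(1/2) by simp; linarith
  eqOn _ hz := (if_pos hz).symm

lemma isRightBranch_Y₂ (hf : MemL1c f) (hx : 0 < x) :
    IsRightBranch (1/2) (fun z => Y₂ f z x) (fun z => -kernelIntegralIoi f x (z - 1)) where
  continuousOn := ((continuousOn_kernelIntegralIoi hf hx).comp (continuous_sub_right 1).continuousOn
    fun z (hz : 1/2 ≤ z.re) => show -(1/2) ≤ (z - 1).re by simp; linarith).neg
  differentiableOn := ((differentiableOn_kernelIntegralIoi hf hx).comp
    (differentiable_id.sub_const 1).differentiableOn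
    fun z (hz : 1/2 < z.re) => show -(1/2) < (z - 1).re by simp; linarith).neg
  eqOn _ hz := (if_neg (lt_asymm hz)).symm

end Solutions

/-- for `φ, ψ ∈ L¹∘(0,∞)` and fixed `x > 0`, the maps `z ↦ y₁ᶻ(x)`,
`z ↦ y₂ᶻ(x)` are analytic on `{Re z < 1/2}` and `{Re z > 1/2}`, extend continuously to their
closures, and across `Σ = {Re z = 1/2}` they jump by `−x^{−z} r₁(z)` and `x^{z−1} r₂(z)`. -/
theorem statement_4 (φ ψ : ℝ → ℂ)
    (hφ1 : MemL1c φ) (hψ1 : MemL1c ψ) (x : ℝ) (hx : 0 < x) :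
    AnalyticOnNhd ℂ (fun z => Y₁ φ z x) {z : ℂ | z.re < 1/2} ∧
    AnalyticOnNhd ℂ (fun z => Y₁ φ z x) {z : ℂ | 1/2 < z.re} ∧
    AnalyticOnNhd ℂ (fun z => Y₂ ψ z x) {z : ℂ | z.re < 1/2} ∧
    AnalyticOnNhd ℂ (fun z => Y₂ ψ z x) {z : ℂ | 1/2 < z.re} ∧
    (∃ F : ℂ → ℂ, ContinuousOn F {z : ℂ | z.re ≤ 1/2} ∧ ∀ z : ℂ, z.re < 1/2 → F z = Y₁ φ z x) ∧
    (∃ F : ℂ → ℂ, ContinuousOn F {z : ℂ | 1/2 ≤ z.re} ∧ ∀ z : ℂ, 1/2 < z.re → F z = Y₁ φ z x) ∧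
    (∃ F : ℂ → ℂ, ContinuousOn F {z : ℂ | z.re ≤ 1/2} ∧ ∀ z : ℂ, z.re < 1/2 → F z = Y₂ ψ z x) ∧
    (∃ F : ℂ → ℂ, ContinuousOn F {z : ℂ | 1/2 ≤ z.re} ∧ ∀ z : ℂ, 1/2 < z.re → F z = Y₂ ψ z x) ∧
    (∀ z : ℂ, z.re = 1/2 → ∃ Lm Lp : ℂ,
      Tendsto (fun ε : ℝ => Y₁ φ (z - (ε : ℂ)) x) (𝓝[>] 0) (𝓝 Lm) ∧
      Tendsto (fun ε : ℝ => Y₁ φ (z + (ε : ℂ)) x) (𝓝[>] 0) (𝓝 Lp) ∧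
      Lm - Lp = -((x : ℂ) ^ (-z) * mr₁ φ z)) ∧
    (∀ z : ℂ, z.re = 1/2 → ∃ Lm Lp : ℂ,
      Tendsto (fun ε : ℝ => Y₂ ψ (z - (ε : ℂ)) x) (𝓝[>] 0) (𝓝 Lm) ∧
      Tendsto (fun ε : ℝ => Y₂ ψ (z + (ε : ℂ)) x) (𝓝[>] 0) (𝓝 Lp) ∧
      Lm - Lp = (x : ℂ) ^ (z - 1) * mr₂ ψ z) := by
  have l₁ := isLeftBranch_Y₁ hφ1 hx
  have r₁ := isRightBranch_Y₁ hφ1 hx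
  have l₂ := isLeftBranch_Y₂ hψ1 hx
  have r₂ := isRightBranch_Y₂ hψ1 hx
  refine ⟨l₁.analyticOnNhd, r₁.analyticOnNhd, l₂.analyticOnNhd, r₂.analyticOnNhd,
    ⟨_, l₁.continuousOn, fun _ hz => l₁.eqOn hz⟩, ⟨_, r₁.continuousOn, fun _ hz => r₁.eqOn hz⟩,
    ⟨_, l₂.continuousOn, fun _ hz => l₂.eqOn hz⟩, ⟨_, r₂.continuousOn, fun _ hz => r₂.eqOn hz⟩,
    fun z hz => ⟨_, _, l₁.tendsto_sub hz, r₁.tendsto_add hz, ?_⟩,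
    fun z hz => ⟨_, _, l₂.tendsto_sub hz, r₂.tendsto_add hz, ?_⟩⟩
  · linear_combination -kernelIntegralIoi_add_kernelIntegralIoo_neg hφ1 hx hz
  · linear_combination kernelIntegralIoi_add_kernelIntegralIoo_sub_one hψ1 hx hz
end

section
/- If the sequences (q_n)_{n≥0}, (p_n)_{n≥0}, (q*_n)_{n≥0}, (p*_n)_{n≥0} of differentiable functions on an open interval J ⊆ ℝ satisfy the Zakharov–Shabat system for all n ≥ 0, then for every n ≥ 0 the function I_n(t) := p_{n+1}(t) + (−1)^n p*_{n+1}(t) + Σ_{k=0}^{n} (−1)^k ( q*_k(t)·q_{n−k}(t) − p*_k(t)·p_{n−k}(t) ) is constant on J. -/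
/-!
Differentiating the `k`-th summand of `I_n` with the Zakharov–Shabat equations, the terms
containing `p_{n-k}` and `p*_k` cancel, leaving `a_k - a_{k+1}` with
`a_k = (-1)^k q*_k q_{n+1-k}`. The sum therefore telescopes to `a_0 - a_{n+1}`, which is exactly
cancelled by the derivatives of `p_{n+1}` and `(-1)^n p*_{n+1}`. So `I_n' = 0` on the interval,
and the mean value theorem makes `I_n` constant.
-/

theorem Convex.is_const_of_hasDerivAt_zero {𝕜 E : Type*} [RCLike 𝕜] [NormedAddCommGroup E]
    [NormedSpace 𝕜 E] {f : 𝕜 → E} {s : Set 𝕜} (hs : Convex ℝ s)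
    (hf : ∀ x ∈ s, HasDerivAt f 0 x) {x y : 𝕜} (hx : x ∈ s) (hy : y ∈ s) : f x = f y := by
  have h := hs.norm_image_sub_le_of_norm_hasDerivWithin_le
    (fun z hz => (hf z hz).hasDerivWithinAt) (fun _ _ => norm_zero.le) hy hx
  simpa [sub_eq_zero] using h

variable {A : Type*} [NormedCommRing A] [NormedAlgebra ℝ A]

structure IsZakharovShabat (J : Set ℝ) (q p qs ps : ℕ → ℝ → A) : Prop where
  hasDerivAt_q : ∀ n, ∀ t ∈ J, HasDerivAt (q n) (q (n+1) t - q 0 t * p n t) t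
  hasDerivAt_p : ∀ n, ∀ t ∈ J, HasDerivAt (p n) (-(qs 0 t * q n t)) t
  hasDerivAt_qs : ∀ n, ∀ t ∈ J, HasDerivAt (qs n) (qs (n+1) t - qs 0 t * ps n t) t
  hasDerivAt_ps : ∀ n, ∀ t ∈ J, HasDerivAt (ps n) (-(q 0 t * qs n t)) t

/-- The quantity `I_n` of the Zakharov–Shabat hierarchy; `q*`, `p*` are written `qs`, `ps`. -/
def zsConservedQuantity (q p qs ps : ℕ → ℝ → A) (n : ℕ) (t : ℝ) : A :=
  p (n+1) t + (-1) ^ n * ps (n+1) t +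
    ∑ k ∈ Finset.range (n+1), (-1) ^ k * (qs k t * q (n-k) t - ps k t * p (n-k) t)

namespace IsZakharovShabat

variable {J : Set ℝ} {q p qs ps : ℕ → ℝ → A} (h : IsZakharovShabat J q p qs ps)
include h

theorem hasDerivAt_summand {n k : ℕ} (hk : k ≤ n) {t : ℝ} (ht : t ∈ J) :
    HasDerivAt (fun t => (-1) ^ k * (qs k t * q (n-k) t - ps k t * p (n-k) t))
      ((-1) ^ k * (qs k t * q (n+1-k) t)
        - (-1) ^ (k+1) * (qs (k+1) t * q (n+1-(k+1)) t)) t := by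
  refine ((((h.hasDerivAt_qs k t ht).mul (h.hasDerivAt_q (n-k) t ht)).sub
    ((h.hasDerivAt_ps k t ht).mul (h.hasDerivAt_p (n-k) t ht))).const_mul _).congr_deriv ?_
  rw [show n + 1 - k = n - k + 1 by omega, show n + 1 - (k + 1) = n - k by omega]
  ring

theorem hasDerivAt_zsConservedQuantity (n : ℕ) {t : ℝ} (ht : t ∈ J) :
    HasDerivAt (zsConservedQuantity q p qs ps n) 0 t := by
  have hsum := HasDerivAt.fun_sum (u := Finset.range (n+1)) fun k hk =>
    h.hasDerivAt_summand (Nat.lt_succ_iff.mp (Finset.mem_range.mp hk)) ht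
  rw [Finset.sum_range_sub' (fun k => (-1) ^ k * (qs k t * q (n+1-k) t))] at hsum
  refine (((h.hasDerivAt_p (n+1) t ht).add
    ((h.hasDerivAt_ps (n+1) t ht).const_mul ((-1) ^ n))).add hsum).congr_deriv ?_
  simp only [Nat.sub_self, Nat.sub_zero, pow_zero, pow_succ]
  ring

theorem zsConservedQuantity_eq (hJ : J.OrdConnected) (n : ℕ) {t s : ℝ} (ht : t ∈ J)
    (hs : s ∈ J) : zsConservedQuantity q p qs ps n t = zsConservedQuantity q p qs ps n s :=
  hJ.convex.is_const_of_hasDerivAt_zero (fun _ hx => h.hasDerivAt_zsConservedQuantity n hx) ht hs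

end IsZakharovShabat

theorem statement_13_general (J : Set ℝ) (hJc : J.OrdConnected)
    (q p qs ps : ℕ → ℝ → ℂ)
    (hq : ∀ n : ℕ, ∀ t ∈ J, HasDerivAt (q n) (q (n+1) t - q 0 t * p n t) t)
    (hp : ∀ n : ℕ, ∀ t ∈ J, HasDerivAt (p n) (-(qs 0 t * q n t)) t)
    (hqs : ∀ n : ℕ, ∀ t ∈ J, HasDerivAt (qs n) (qs (n+1) t - qs 0 t * ps n t) t)
    (hps : ∀ n : ℕ, ∀ t ∈ J, HasDerivAt (ps n) (-(q 0 t * qs n t)) t)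
    (n : ℕ) :
    ∀ t ∈ J, ∀ s ∈ J,
      p (n+1) t + (-1 : ℂ) ^ n * ps (n+1) t +
        ∑ k ∈ Finset.range (n+1), (-1 : ℂ) ^ k * (qs k t * q (n-k) t - ps k t * p (n-k) t)
      =
      p (n+1) s + (-1 : ℂ) ^ n * ps (n+1) s +
        ∑ k ∈ Finset.range (n+1), (-1 : ℂ) ^ k * (qs k s * q (n-k) s - ps k s * p (n-k) s) :=
  fun _ ht _ hs => (IsZakharovShabat.mk hq hp hqs hps).zsConservedQuantity_eq hJc n ht hs

/-- if `(q_n), (p_n), (q*_n), (p*_n)` satisfy the Zakharov–Shabat system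
`q_n′ = q_{n+1} − q₀ p_n`, `p_n′ = −q₀* q_n`, `(q*_n)′ = q*_{n+1} − q₀* p*_n`,
`(p*_n)′ = −q₀ q*_n` on an open interval `J ⊆ ℝ`, then for each `n ≥ 0`
`I_n = p_{n+1} + (−1)ⁿ p*_{n+1} + Σ_{k=0}^n (−1)ᵏ (q*_k q_{n−k} − p*_k p_{n−k})`
is constant on `J`. -/
theorem statement_13 (J : Set ℝ) (hJo : IsOpen J) (hJc : J.OrdConnected)
    (q p qs ps : ℕ → ℝ → ℂ)
    (hq : ∀ n : ℕ, ∀ t ∈ J, HasDerivAt (q n) (q (n+1) t - q 0 t * p n t) t)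
    (hp : ∀ n : ℕ, ∀ t ∈ J, HasDerivAt (p n) (-(qs 0 t * q n t)) t)
    (hqs : ∀ n : ℕ, ∀ t ∈ J, HasDerivAt (qs n) (qs (n+1) t - qs 0 t * ps n t) t)
    (hps : ∀ n : ℕ, ∀ t ∈ J, HasDerivAt (ps n) (-(q 0 t * qs n t)) t)
    (n : ℕ) :
    ∀ t ∈ J, ∀ s ∈ J,
      p (n+1) t + (-1 : ℂ) ^ n * ps (n+1) t +
        ∑ k ∈ Finset.range (n+1), (-1 : ℂ) ^ k * (qs k t * q (n-k) t - ps k t * p (n-k) t)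
      =
      p (n+1) s + (-1 : ℂ) ^ n * ps (n+1) s +
        ∑ k ∈ Finset.range (n+1), (-1 : ℂ) ^ k * (qs k s * q (n-k) s - ps k s * p (n-k) s) :=
  statement_13_general J hJc q p qs ps hq hp hqs hps n
end

section
/- If the sequences (q_n)_{n≥0}, (p_n)_{n≥0}, (q*_n)_{n≥0}, (p*_n)_{n≥0} of differentiable functions on an open interval J ⊆ (0,∞) satisfy the multiplicative Zakharov–Shabat system for all n ≥ 0, then for every n ≥ 0 the function I_n(t) := p_{n+1}(t) + (−1)^n p*_{n+1}(t) − Σ_{k=0}^{n} (−1)^k ( q*_k(t)·q_{n−k}(t) − p*_k(t)·p_{n−k}(t) ) is constant on J. -/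
open Set Filter Topology

/-! Differentiating `I_n` by the product rule and substituting the system, the `k`-th summand
becomes `(-1)^k (a_k + a_{k+1})` with `a_k = q*_k q_{n+1-k}`, so the sum telescopes to
`a_0 + (-1)^n a_{n+1} = q₀* q_{n+1} + (-1)^n q₀ q*_{n+1}`, which is exactly
`t (p_{n+1} + (-1)^n p*_{n+1})′`. Hence `t I_n′ = 0`, and `I_n′ = 0` since `t > 0`. -/

theorem Convex.is_const_of_hasDerivWithinAt_zero {𝕜 G : Type*} [RCLike 𝕜]
    [NormedAddCommGroup G] [NormedSpace 𝕜 G] {f : 𝕜 → G} {s : Set 𝕜} (hs : Convex ℝ s)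
    (hf : ∀ x ∈ s, HasDerivWithinAt f 0 s x) {x y : 𝕜} (hx : x ∈ s) (hy : y ∈ s) :
    f x = f y := by
  have := hs.norm_image_sub_le_of_norm_hasDerivWithin_le hf (fun _ _ => norm_zero.le) hy hx
  rwa [zero_mul, norm_le_zero_iff, sub_eq_zero] at this

namespace ZakharovShabat

open Finset

variable (q p qs ps : ℕ → ℂ)

def invariant (n : ℕ) : ℂ :=
  p (n+1) + (-1) ^ n * ps (n+1) -
    ∑ k ∈ range (n+1), (-1) ^ k * (qs k * q (n-k) - ps k * p (n-k))

/-- The derivative of `invariant` at `(q, p, qs, ps)` in the direction `(dq, dp, dqs, dps)`. -/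
def invariantDeriv (dq dp dqs dps : ℕ → ℂ) (n : ℕ) : ℂ :=
  dp (n+1) + (-1) ^ n * dps (n+1) -
    ∑ k ∈ range (n+1), (-1) ^ k *
      ((dqs k * q (n-k) + qs k * dq (n-k)) - (dps k * p (n-k) + ps k * dp (n-k)))

theorem const_mul_invariantDeriv (dq dp dqs dps : ℕ → ℂ) (n : ℕ) (c : ℂ) :
    c * invariantDeriv q p qs ps dq dp dqs dps n =
      invariantDeriv q p qs ps (c * dq ·) (c * dp ·) (c * dqs ·) (c * dps ·) n := by
  simp only [invariantDeriv, mul_sub, mul_sum]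
  congr 1
  · ring
  · exact sum_congr rfl fun _ _ => by ring

theorem invariantDeriv_zakharovShabat (n : ℕ) :
    invariantDeriv q p qs ps (fun k => q (k+1) + q 0 * p k) (fun k => qs 0 * q k)
      (fun k => qs (k+1) + qs 0 * ps k) (fun k => q 0 * qs k) n = 0 := by
  set a : ℕ → ℂ := fun k => (-1) ^ k * (qs k * q (n+1-k))
  have hsummand : ∀ k ∈ range (n+1), (-1) ^ k *
      (((qs (k+1) + qs 0 * ps k) * q (n-k) + qs k * (q (n-k+1) + q 0 * p (n-k))) -
        (q 0 * qs k * p (n-k) + ps k * (qs 0 * q (n-k)))) = a k - a (k+1) := by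
    intro k hk
    have hkn : k ≤ n := Nat.lt_succ_iff.mp (mem_range.mp hk)
    simp only [a, show n - k + 1 = n + 1 - k by omega, show n + 1 - (k+1) = n - k by omega,
      pow_succ]
    ring
  rw [invariantDeriv, sum_congr rfl hsummand, sum_range_sub']
  simp only [a, Nat.sub_self, Nat.sub_zero, pow_zero, pow_succ]
  ring

theorem hasDerivAt_invariant {q p qs ps : ℕ → ℝ → ℂ} {dq dp dqs dps : ℕ → ℂ} {t : ℝ}
    (hq : ∀ k, HasDerivAt (q k) (dq k) t) (hp : ∀ k, HasDerivAt (p k) (dp k) t)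
    (hqs : ∀ k, HasDerivAt (qs k) (dqs k) t) (hps : ∀ k, HasDerivAt (ps k) (dps k) t)
    (n : ℕ) :
    HasDerivAt (fun s => invariant (q · s) (p · s) (qs · s) (ps · s) n)
      (invariantDeriv (q · t) (p · t) (qs · t) (ps · t) dq dp dqs dps n) t :=
  ((hp _).add ((hps _).const_mul _)).sub <| .fun_sum fun k _ =>
    (((hqs k).mul (hq _)).sub ((hps k).mul (hp _))).const_mul _

end ZakharovShabat

open ZakharovShabat in
theorem statement_14_general (J : Set ℝ) (hJc : J.OrdConnected)
    (hJpos : J ⊆ Ioi 0)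
    (q p qs ps : ℕ → ℝ → ℂ)
    (hq : ∀ n : ℕ, ∀ t ∈ J, ∃ d : ℂ,
      HasDerivAt (q n) d t ∧ (t : ℂ) * d = q (n+1) t + q 0 t * p n t)
    (hp : ∀ n : ℕ, ∀ t ∈ J, ∃ d : ℂ,
      HasDerivAt (p n) d t ∧ (t : ℂ) * d = qs 0 t * q n t)
    (hqs : ∀ n : ℕ, ∀ t ∈ J, ∃ d : ℂ,
      HasDerivAt (qs n) d t ∧ (t : ℂ) * d = qs (n+1) t + qs 0 t * ps n t)
    (hps : ∀ n : ℕ, ∀ t ∈ J, ∃ d : ℂ,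
      HasDerivAt (ps n) d t ∧ (t : ℂ) * d = q 0 t * qs n t)
    (n : ℕ) :
    ∀ t ∈ J, ∀ s ∈ J,
      p (n+1) t + (-1 : ℂ) ^ n * ps (n+1) t -
        ∑ k ∈ Finset.range (n+1), (-1 : ℂ) ^ k * (qs k t * q (n-k) t - ps k t * p (n-k) t)
      =
      p (n+1) s + (-1 : ℂ) ^ n * ps (n+1) s -
        ∑ k ∈ Finset.range (n+1), (-1 : ℂ) ^ k * (qs k s * q (n-k) s - ps k s * p (n-k) s) := by
  intro t ht s hs
  refine hJc.convex.is_const_of_hasDerivWithinAt_zero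
    (f := fun x => invariant (q · x) (p · x) (qs · x) (ps · x) n) (fun x hx => ?_) ht hs
  choose dq hdq hdqe using fun k => hq k x hx
  choose dp hdp hdpe using fun k => hp k x hx
  choose dqs hdqs hdqse using fun k => hqs k x hx
  choose dps hdps hdpse using fun k => hps k x hx
  have hx0 : (x : ℂ) ≠ 0 := Complex.ofReal_ne_zero.mpr (hJpos hx).ne'
  have hderiv : invariantDeriv (q · x) (p · x) (qs · x) (ps · x) dq dp dqs dps n = 0 := by
    refine (mul_eq_zero.mp ?_).resolve_left hx0
    rw [const_mul_invariantDeriv]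
    simp only [hdqe, hdpe, hdqse, hdpse]
    exact invariantDeriv_zakharovShabat _ _ _ _ n
  exact (hderiv ▸ hasDerivAt_invariant hdq hdp hdqs hdps n).hasDerivWithinAt

/-- if `(q_n), (p_n), (q*_n), (p*_n)` satisfy the multiplicative
Zakharov–Shabat system `t q_n′ = q_{n+1} + q₀ p_n`, `t p_n′ = q₀* q_n`,
`t (q*_n)′ = q*_{n+1} + q₀* p*_n`, `t (p*_n)′ = q₀ q*_n` on an open interval `J ⊆ (0,∞)`,
then for each `n ≥ 0`
`I_n = p_{n+1} + (−1)ⁿ p*_{n+1} − Σ_{k=0}^n (−1)ᵏ (q*_k q_{n−k} − p*_k p_{n−k})`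
is constant on `J`. -/
theorem statement_14 (J : Set ℝ) (hJo : IsOpen J) (hJc : J.OrdConnected)
    (hJpos : J ⊆ Ioi 0)
    (q p qs ps : ℕ → ℝ → ℂ)
    (hq : ∀ n : ℕ, ∀ t ∈ J, ∃ d : ℂ,
      HasDerivAt (q n) d t ∧ (t : ℂ) * d = q (n+1) t + q 0 t * p n t)
    (hp : ∀ n : ℕ, ∀ t ∈ J, ∃ d : ℂ,
      HasDerivAt (p n) d t ∧ (t : ℂ) * d = qs 0 t * q n t)
    (hqs : ∀ n : ℕ, ∀ t ∈ J, ∃ d : ℂ,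
      HasDerivAt (qs n) d t ∧ (t : ℂ) * d = qs (n+1) t + qs 0 t * ps n t)
    (hps : ∀ n : ℕ, ∀ t ∈ J, ∃ d : ℂ,
      HasDerivAt (ps n) d t ∧ (t : ℂ) * d = q 0 t * qs n t)
    (n : ℕ) :
    ∀ t ∈ J, ∀ s ∈ J,
      p (n+1) t + (-1 : ℂ) ^ n * ps (n+1) t -
        ∑ k ∈ Finset.range (n+1), (-1 : ℂ) ^ k * (qs k t * q (n-k) t - ps k t * p (n-k) t)
      =
      p (n+1) s + (-1 : ℂ) ^ n * ps (n+1) s -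
        ∑ k ∈ Finset.range (n+1), (-1 : ℂ) ^ k * (qs k s * q (n-k) s - ps k s * p (n-k) s) :=
  statement_14_general J hJc hJpos q p qs ps hq hp hqs hps n
end

section
/- Let ε > 0, a ≥ 2 + ε, and let φ : ℝ → ℂ be continuously differentiable with |φ(x)| ≤ e^{−a|x|} and |φ′(x)| ≤ e^{−a|x|} for all x ∈ ℝ. Then the formula r₁(z) := −i ∫_ℝ φ(y) e^{−izy} dy defines a function on the closed strip {z ∈ ℂ : |Im z| ≤ ε} that is analytic on its interior and continuous on the strip, and it satisfies |r₁(z)| ≤ 2a/((a−ε)(a+ε)) < 1 for all z with |Im z| ≤ ε; moreover, for all such z one has z·r₁(z) = −∫_ℝ φ′(y) e^{−izy} dy, and hence |z·r₁(z)| ≤ 2a/((a−ε)(a+ε)) < 1 on the same closed strip. -/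
/-!
On a strip `|Im z| ≤ b < a` the integrand `φ(y) e^{-izy}` is dominated by `e^{-(a-b)|y|}`, and
`∫ e^{-a|y| + uy} dy = 1/(a-u) + 1/(a+u) = 2a/(a²-u²)`, which gives integrability and the bound.
Differentiating under the integral sign costs a factor `|y|`, absorbed by halving the decay rate,
so the transform is holomorphic on the open strip `|Im z| < a`, which contains the closed
`ε`-strip. Integration by parts, with no boundary terms since `φ(y) e^{-izy}` and its derivative
are integrable, gives `z r₁(z) = -∫ φ' e^{-izy}`.
-/

open MeasureTheory Set Complex Filter Topology

noncomputable def fourierLaplace (f : ℝ → ℂ) (z : ℂ) : ℂ :=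
  ∫ y : ℝ, f y * cexp (-I * z * y)

lemma norm_cexp_neg_I_mul_mul_ofReal (z : ℂ) (y : ℝ) :
    ‖cexp (-I * z * y)‖ = Real.exp (z.im * y) := by
  rw [Complex.norm_exp]
  simp [Complex.mul_re]

lemma integrable_exp_neg_mul_abs_add_mul {a u : ℝ} (h : |u| < a) :
    Integrable fun y : ℝ => Real.exp (-a * |y| + u * y) := by
  obtain ⟨hu₁, hu₂⟩ := abs_lt.mp h
  have hIic : IntegrableOn (fun y : ℝ => Real.exp (-a * |y| + u * y)) (Iic 0) :=
    (integrableOn_exp_mul_Iic (a := a + u) (by linarith) 0).congr_fun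
      (fun y hy => by simp only [abs_of_nonpos (mem_Iic.mp hy)]; ring_nf) measurableSet_Iic
  have hIoi : IntegrableOn (fun y : ℝ => Real.exp (-a * |y| + u * y)) (Ioi 0) :=
    (integrableOn_exp_mul_Ioi (a := u - a) (by linarith) 0).congr_fun
      (fun y hy => by simp only [abs_of_pos (mem_Ioi.mp hy)]; ring_nf) measurableSet_Ioi
  rw [← integrableOn_univ, ← Iic_union_Ioi (a := (0 : ℝ))]
  exact hIic.union hIoi

lemma integral_exp_neg_mul_abs_add_mul {a u : ℝ} (h : |u| < a) :
    ∫ y : ℝ, Real.exp (-a * |y| + u * y) = 1 / (a - u) + 1 / (a + u) := by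
  obtain ⟨hu₁, hu₂⟩ := abs_lt.mp h
  have hint := integrable_exp_neg_mul_abs_add_mul h
  have hIic : ∫ y in Iic (0 : ℝ), Real.exp (-a * |y| + u * y) = 1 / (a + u) := by
    rw [setIntegral_congr_fun measurableSet_Iic (g := fun y => Real.exp ((a + u) * y))
      (fun y hy => by simp only [abs_of_nonpos (mem_Iic.mp hy)]; ring_nf),
      integral_exp_mul_Iic (by linarith), mul_zero, Real.exp_zero]
  have hIoi : ∫ y in Ioi (0 : ℝ), Real.exp (-a * |y| + u * y) = 1 / (a - u) := by
    rw [setIntegral_congr_fun measurableSet_Ioi (g := fun y => Real.exp ((u - a) * y))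
      (fun y hy => by simp only [abs_of_pos (mem_Ioi.mp hy)]; ring_nf),
      integral_exp_mul_Ioi (by linarith), mul_zero, Real.exp_zero, ← neg_sub, div_neg,
      neg_div, neg_neg]
  rw [← intervalIntegral.integral_Iic_add_Ioi hint.integrableOn hint.integrableOn, hIic, hIoi,
    add_comm]

lemma exp_neg_mul_abs_add_mul_le {a b u : ℝ} (hu : |u| ≤ b) (y : ℝ) :
    Real.exp (-a * |y| + u * y) ≤ Real.exp (-(a - b) * |y|) := by
  have : u * y ≤ b * |y| :=
    (le_abs_self _).trans (by rw [abs_mul]; exact mul_le_mul_of_nonneg_right hu (abs_nonneg y))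
  rw [Real.exp_le_exp]
  linarith

lemma abs_mul_exp_neg_mul_abs_le {c : ℝ} (hc : 0 < c) (y : ℝ) :
    |y| * Real.exp (-c * |y|) ≤ 2 / c * Real.exp (-(c / 2) * |y|) := by
  have hy : |y| ≤ 2 / c * Real.exp (c / 2 * |y|) := by
    rw [div_mul_eq_mul_div, le_div_iff₀ hc]
    nlinarith [Real.add_one_le_exp (c / 2 * |y|), abs_nonneg y]
  calc |y| * Real.exp (-c * |y|) ≤ 2 / c * Real.exp (c / 2 * |y|) * Real.exp (-c * |y|) :=
        mul_le_mul_of_nonneg_right hy (Real.exp_pos _).le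
    _ = 2 / c * Real.exp (-(c / 2) * |y|) := by rw [mul_assoc, ← Real.exp_add]; ring_nf

lemma inv_sub_add_inv_add_le {a ε u : ℝ} (hεa : ε < a) (hu : |u| ≤ ε) :
    1 / (a - u) + 1 / (a + u) ≤ 2 * a / ((a - ε) * (a + ε)) := by
  obtain ⟨hu₁, hu₂⟩ := abs_le.mp hu
  have h₁ : 0 < a - u := by linarith
  have h₂ : 0 < a + u := by linarith
  have hsum : 1 / (a - u) + 1 / (a + u) = 2 * a / ((a - u) * (a + u)) := by
    field_simp; ring
  rw [hsum]
  apply div_le_div_of_nonneg_left (by linarith) (by nlinarith)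
  nlinarith

lemma two_mul_div_sub_mul_add_lt_one {a ε : ℝ} (hε : 0 < ε) (ha : 2 + ε ≤ a) :
    2 * a / ((a - ε) * (a + ε)) < 1 := by
  rw [div_lt_one (by nlinarith)]
  nlinarith

section Decay

variable {f : ℝ → ℂ} {a : ℝ}

lemma norm_mul_cexp_le (hf : ∀ y, ‖f y‖ ≤ Real.exp (-a * |y|)) (z : ℂ) (y : ℝ) :
    ‖f y * cexp (-I * z * y)‖ ≤ Real.exp (-a * |y| + z.im * y) := by
  rw [norm_mul, norm_cexp_neg_I_mul_mul_ofReal, Real.exp_add]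
  exact mul_le_mul_of_nonneg_right (hf y) (Real.exp_pos _).le

lemma integrable_mul_cexp (hf_meas : AEStronglyMeasurable f)
    (hf : ∀ y, ‖f y‖ ≤ Real.exp (-a * |y|)) {z : ℂ} (hz : |z.im| < a) :
    Integrable fun y : ℝ => f y * cexp (-I * z * y) :=
  (integrable_exp_neg_mul_abs_add_mul hz).mono'
    (hf_meas.mul (by fun_prop : Continuous fun y : ℝ => cexp (-I * z * y)).aestronglyMeasurable)
    (ae_of_all _ (norm_mul_cexp_le hf z))

lemma norm_fourierLaplace_le (hf : ∀ y, ‖f y‖ ≤ Real.exp (-a * |y|)) {z : ℂ}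
    (hz : |z.im| < a) : ‖fourierLaplace f z‖ ≤ 1 / (a - z.im) + 1 / (a + z.im) := by
  rw [← integral_exp_neg_mul_abs_add_mul hz]
  exact norm_integral_le_of_norm_le (integrable_exp_neg_mul_abs_add_mul hz)
    (ae_of_all _ (norm_mul_cexp_le hf z))

lemma norm_fourierLaplace_le_of_abs_im_le (hf : ∀ y, ‖f y‖ ≤ Real.exp (-a * |y|)) {ε : ℝ}
    (hεa : ε < a) {z : ℂ} (hz : |z.im| ≤ ε) :
    ‖fourierLaplace f z‖ ≤ 2 * a / ((a - ε) * (a + ε)) :=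
  (norm_fourierLaplace_le hf (hz.trans_lt hεa)).trans (inv_sub_add_inv_add_le hεa hz)

lemma differentiableAt_fourierLaplace (hf_meas : AEStronglyMeasurable f)
    (hf : ∀ y, ‖f y‖ ≤ Real.exp (-a * |y|)) {z₀ : ℂ} (hz₀ : |z₀.im| < a) :
    DifferentiableAt ℂ (fourierLaplace f) z₀ := by
  set δ := (a - |z₀.im|) / 2 with hδ
  have hδ_pos : 0 < δ := by linarith
  have him : ∀ z ∈ Metric.ball z₀ δ, |z.im| ≤ a - δ := fun z hz => by
    have h₁ : |z.im - z₀.im| ≤ ‖z - z₀‖ := by rw [← Complex.sub_im]; exact abs_im_le_norm _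
    have h₂ := abs_sub_abs_le_abs_sub z.im z₀.im
    rw [Metric.mem_ball, dist_eq_norm] at hz
    linarith
  have hderiv : ∀ (y : ℝ) (z : ℂ), HasDerivAt (fun w : ℂ => f y * cexp (-I * w * y))
      (f y * (cexp (-I * z * y) * (-I * y))) z := fun y z => by
    have : HasDerivAt (fun w : ℂ => -I * w * y) (-I * y) z := by
      simpa using ((hasDerivAt_id z).const_mul (-I)).mul_const (y : ℂ)
    exact this.cexp.const_mul (f y)
  have hbound : ∀ (y : ℝ), ∀ z ∈ Metric.ball z₀ δ,
      ‖f y * (cexp (-I * z * y) * (-I * y))‖ ≤ 2 / δ * Real.exp (-(δ / 2) * |y|) :=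
    fun y z hz => calc
      ‖f y * (cexp (-I * z * y) * (-I * y))‖ = |y| * ‖f y * cexp (-I * z * y)‖ := by
        simp only [← mul_assoc, norm_mul, norm_neg, norm_I, norm_real, Real.norm_eq_abs]
        ring
      _ ≤ |y| * Real.exp (-δ * |y|) := by
        refine mul_le_mul_of_nonneg_left ((norm_mul_cexp_le hf z y).trans ?_) (abs_nonneg y)
        simpa using exp_neg_mul_abs_add_mul_le (a := a) (him z hz) y
      _ ≤ 2 / δ * Real.exp (-(δ / 2) * |y|) := abs_mul_exp_neg_mul_abs_le hδ_pos y
  have hmeas : ∀ z : ℂ, AEStronglyMeasurable fun y : ℝ => f y * cexp (-I * z * y) := fun z =>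
    hf_meas.mul (by fun_prop : Continuous fun y : ℝ => cexp (-I * z * y)).aestronglyMeasurable
  exact (hasDerivAt_integral_of_dominated_loc_of_deriv_le (Metric.ball_mem_nhds z₀ hδ_pos)
    (Eventually.of_forall hmeas) (integrable_mul_cexp hf_meas hf hz₀)
    (hf_meas.mul
      (by fun_prop : Continuous fun y : ℝ => cexp (-I * z₀ * y) * (-I * y)).aestronglyMeasurable)
    (ae_of_all _ hbound)
    ((integrable_exp_neg_mul_abs_add_mul (a := δ / 2) (u := 0) (by simpa using half_pos hδ_pos))
      |>.const_mul (2 / δ) |>.congr (ae_of_all _ fun y => by simp))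
    (ae_of_all _ fun y z _ => hderiv y z)).2.differentiableAt

lemma differentiableOn_fourierLaplace (hf_meas : AEStronglyMeasurable f)
    (hf : ∀ y, ‖f y‖ ≤ Real.exp (-a * |y|)) :
    DifferentiableOn ℂ (fourierLaplace f) {z : ℂ | |z.im| < a} :=
  fun _ hz => (differentiableAt_fourierLaplace hf_meas hf hz).differentiableWithinAt

end Decay

lemma fourierLaplace_of_hasDerivAt {φ φ' : ℝ → ℂ} (hφ : ∀ x, HasDerivAt φ (φ' x) x) {z : ℂ}
    (hint : Integrable fun y : ℝ => φ y * cexp (-I * z * y))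
    (hint' : Integrable fun y : ℝ => φ' y * cexp (-I * z * y)) :
    fourierLaplace φ' z = I * z * fourierLaplace φ z := by
  have he : ∀ y : ℝ, HasDerivAt (fun t : ℝ => cexp (-I * z * t)) (-I * z * cexp (-I * z * y)) y :=
    fun y => by
      have : HasDerivAt (fun w : ℂ => -I * z * w) (-I * z) (y : ℂ) := by
        simpa using (hasDerivAt_id (y : ℂ)).const_mul (-I * z)
      simpa [mul_comm] using this.cexp.comp_ofReal
  have hparts := integral_mul_deriv_eq_deriv_mul_of_integrable (fun y _ => hφ y) (fun y _ => he y)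
    (by simpa [Pi.mul_def, mul_left_comm] using hint.const_mul (-I * z)) hint' hint
  simp only [mul_left_comm (φ _), integral_const_mul] at hparts
  rw [fourierLaplace, ← neg_neg (∫ y, φ' y * _), ← hparts, fourierLaplace]
  ring

/-- for `ε > 0`, `a ≥ 2 + ε` and `φ` continuously differentiable with
`|φ(x)| ≤ e^{−a|x|}` and `|φ′(x)| ≤ e^{−a|x|}`, the Fourier transform `r₁` is defined on the
closed strip `|Im z| ≤ ε`, analytic in its interior, continuous on the strip, and satisfies
`|r₁(z)| ≤ 2a/((a−ε)(a+ε)) < 1`; moreover `z·r₁(z) = −∫_ℝ φ′(y) e^{−izy} dy`, whence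
`|z·r₁(z)| ≤ 2a/((a−ε)(a+ε)) < 1` on the same strip. -/
theorem statement_15 (ε a : ℝ) (hε : 0 < ε) (ha : 2 + ε ≤ a)
    (φ φ' : ℝ → ℂ)
    (hφd : ∀ x : ℝ, HasDerivAt φ (φ' x) x) (hφ'c : Continuous φ')
    (hφb : ∀ x : ℝ, ‖φ x‖ ≤ Real.exp (-a * |x|))
    (hφ'b : ∀ x : ℝ, ‖φ' x‖ ≤ Real.exp (-a * |x|)) :
    (∀ z : ℂ, |z.im| ≤ ε →
        Integrable (fun y : ℝ => φ y * Complex.exp (-Complex.I * z * (y : ℂ))) volume) ∧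
    AnalyticOnNhd ℂ (r₁ φ) {z : ℂ | |z.im| < ε} ∧
    ContinuousOn (r₁ φ) {z : ℂ | |z.im| ≤ ε} ∧
    2 * a / ((a - ε) * (a + ε)) < 1 ∧
    (∀ z : ℂ, |z.im| ≤ ε → ‖r₁ φ z‖ ≤ 2 * a / ((a - ε) * (a + ε))) ∧
    (∀ z : ℂ, |z.im| ≤ ε →
        z * r₁ φ z = -∫ y : ℝ, φ' y * Complex.exp (-Complex.I * z * (y : ℂ))) ∧
    (∀ z : ℂ, |z.im| ≤ ε → ‖z * r₁ φ z‖ ≤ 2 * a / ((a - ε) * (a + ε))) := by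
  have hεa : ε < a := by linarith
  have hφm : AEStronglyMeasurable φ :=
    (continuous_iff_continuousAt.mpr fun x => (hφd x).continuousAt).aestronglyMeasurable
  have hr₁ : r₁ φ = fun z => -I * fourierLaplace φ z := rfl
  have hdiff : DifferentiableOn ℂ (r₁ φ) {z : ℂ | |z.im| < a} :=
    hr₁ ▸ (differentiableOn_fourierLaplace hφm hφb).const_mul (-I)
  have hint : ∀ z : ℂ, |z.im| ≤ ε → Integrable fun y : ℝ => φ y * cexp (-I * z * y) :=
    fun z hz => integrable_mul_cexp hφm hφb (hz.trans_lt hεa)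
  have hmul : ∀ z : ℂ, |z.im| ≤ ε → z * r₁ φ z = -fourierLaplace φ' z := fun z hz => by
    rw [fourierLaplace_of_hasDerivAt hφd (hint z hz)
      (integrable_mul_cexp hφ'c.aestronglyMeasurable hφ'b (hz.trans_lt hεa)), hr₁]
    ring
  refine ⟨hint, ?_, ?_, two_mul_div_sub_mul_add_lt_one hε ha, fun z hz => ?_, hmul,
    fun z hz => ?_⟩
  · exact (hdiff.mono fun z hz => hz.trans hεa).analyticOnNhd
      (isOpen_lt (by fun_prop) continuous_const)
  · exact hdiff.continuousOn.mono fun z hz => hz.trans_lt hεa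
  · rw [hr₁, norm_mul, norm_neg, norm_I, one_mul]
    exact norm_fourierLaplace_le_of_abs_im_le hφb hεa hz
  · rw [hmul z hz, norm_neg]
    exact norm_fourierLaplace_le_of_abs_im_le hφ'b hεa hz
end

section
/- Let ε > 0, a ≥ 2 + ε, and let φ : (0,∞) → ℂ be continuously differentiable with |φ(x)| ≤ x^{−1/2} e^{−a|ln x|} and |x·φ′(x)| ≤ x^{−1/2} e^{−a|ln x|} for all x > 0. Then the formula r₁(z) := ∫_0^∞ y^{z−1} φ(y) dy defines a function on the closed strip {z ∈ ℂ : |Re z − 1/2| ≤ ε/2} that is analytic on its interior and continuous on the strip, and it satisfies |r₁(z)| ≤ 2/(a − ε/2) < 1 for all z with |Re z − 1/2| ≤ ε/2; moreover, for all such z one has z·r₁(z) = −∫_0^∞ y^{z−1} (y·φ′(y)) dy, and hence |z·r₁(z)| ≤ 2/(a − ε/2) < 1 on the same closed strip. -/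
/-!
On `(0, 1]` the weight `x^{-1/2} e^{-a|log x|}` is `x^{a - 1/2}` and on `[1, ∞)` it is
`x^{-a - 1/2}`, so for `|Re z - 1/2| < a` the integrand `y^{z-1} φ(y)` is dominated by
`y^{b-1}` near `0` and by `y^{-b-1}` near `∞`, where `b = a - |Re z - 1/2|`; each piece
integrates to `1/b`. The same decay makes `y^z φ(y)` vanish at both ends, so integrating by
parts turns `z r₁(z)` into `-∫ y^{z-1} (y φ'(y)) dy`, which obeys the same bound. The same
power decay at `0` and `∞` makes `r₁` holomorphic on the whole open strip `|Re z - 1/2| < a`.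
-/

open MeasureTheory Set Complex Filter Topology

namespace Real

lemma exp_neg_mul_abs_log_div_sqrt_of_le_one {a y : ℝ} (hy : 0 < y) (hy1 : y ≤ 1) :
    exp (-a * |log y|) / √y = y ^ (a - 1/2) := by
  rw [abs_of_nonpos (log_nonpos hy.le hy1), sqrt_eq_rpow, show -a * -log y = log y * a by ring,
    ← rpow_def_of_pos hy, ← rpow_sub hy]

lemma exp_neg_mul_abs_log_div_sqrt_of_one_le {a y : ℝ} (hy1 : 1 ≤ y) :
    exp (-a * |log y|) / √y = y ^ (-a - 1/2) := by
  have hy : 0 < y := one_pos.trans_le hy1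
  rw [abs_of_nonneg (log_nonneg hy1), sqrt_eq_rpow, show -a * log y = log y * -a by ring,
    ← rpow_def_of_pos hy, ← rpow_sub hy]

end Real

section TwoSidedPowerBound

variable {E : Type*} [NormedAddCommGroup E] {F : ℝ → E} {b : ℝ}

lemma integrableOn_Ioc_zero_one_rpow_sub_one (hb : 0 < b) :
    IntegrableOn (fun y : ℝ => y ^ (b - 1)) (Ioc 0 1) := by
  rw [← intervalIntegrable_iff_integrableOn_Ioc_of_le zero_le_one]
  exact intervalIntegral.intervalIntegrable_rpow' (by linarith)

lemma integral_Ioc_zero_one_rpow_sub_one (hb : 0 < b) :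
    ∫ y in Ioc (0:ℝ) 1, y ^ (b - 1) = 1 / b := by
  rw [← intervalIntegral.integral_of_le zero_le_one, integral_rpow (Or.inl (by linarith)),
    sub_add_cancel, Real.one_rpow, Real.zero_rpow hb.ne', sub_zero]

lemma integral_Ioi_one_rpow_neg_sub_one (hb : 0 < b) :
    ∫ y in Ioi (1:ℝ), y ^ (-b - 1) = 1 / b := by
  rw [integral_Ioi_rpow_of_lt (by linarith) one_pos, Real.one_rpow, sub_add_cancel,
    div_neg, neg_div, neg_neg]

lemma integrableOn_Ioi_zero_of_norm_le_rpow (hb : 0 < b)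
    (hF : AEStronglyMeasurable F (volume.restrict (Ioi 0)))
    (h₀ : ∀ y ∈ Ioc (0:ℝ) 1, ‖F y‖ ≤ y ^ (b - 1)) (h₁ : ∀ y ∈ Ioi (1:ℝ), ‖F y‖ ≤ y ^ (-b - 1)) :
    IntegrableOn F (Ioi 0) := by
  rw [← Ioc_union_Ioi_eq_Ioi zero_le_one]
  refine IntegrableOn.union ?_ ?_
  · exact (integrableOn_Ioc_zero_one_rpow_sub_one hb).mono'
      (hF.mono_set Ioc_subset_Ioi_self)
      ((ae_restrict_iff' measurableSet_Ioc).mpr (ae_of_all _ h₀))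
  · exact (integrableOn_Ioi_rpow_of_lt (by linarith) one_pos).mono'
      (hF.mono_set (Ioi_subset_Ioi zero_le_one))
      ((ae_restrict_iff' measurableSet_Ioi).mpr (ae_of_all _ h₁))

lemma norm_integral_Ioi_zero_le_of_norm_le_rpow [NormedSpace ℝ E] (hb : 0 < b)
    (hF : AEStronglyMeasurable F (volume.restrict (Ioi 0)))
    (h₀ : ∀ y ∈ Ioc (0:ℝ) 1, ‖F y‖ ≤ y ^ (b - 1)) (h₁ : ∀ y ∈ Ioi (1:ℝ), ‖F y‖ ≤ y ^ (-b - 1)) :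
    ‖∫ y in Ioi 0, F y‖ ≤ 2 / b := by
  have hF' := integrableOn_Ioi_zero_of_norm_le_rpow hb hF h₀ h₁
  have hF₀ : IntegrableOn F (Ioc 0 1) := hF'.mono_set Ioc_subset_Ioi_self
  have hF₁ : IntegrableOn F (Ioi 1) := hF'.mono_set (Ioi_subset_Ioi zero_le_one)
  calc ‖∫ y in Ioi 0, F y‖ ≤ ∫ y in Ioi 0, ‖F y‖ := norm_integral_le_integral_norm _
    _ = (∫ y in Ioc 0 1, ‖F y‖) + ∫ y in Ioi 1, ‖F y‖ := by
        rw [← Ioc_union_Ioi_eq_Ioi zero_le_one,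
          setIntegral_union (Ioc_disjoint_Ioi le_rfl) measurableSet_Ioi hF₀.norm hF₁.norm]
    _ ≤ (∫ y in Ioc 0 1, y ^ (b - 1)) + ∫ y in Ioi 1, y ^ (-b - 1) :=
        add_le_add
          (setIntegral_mono_on hF₀.norm (integrableOn_Ioc_zero_one_rpow_sub_one hb)
            measurableSet_Ioc h₀)
          (setIntegral_mono_on hF₁.norm (integrableOn_Ioi_rpow_of_lt (by linarith) one_pos)
            measurableSet_Ioi h₁)
    _ = 2 / b := by
        rw [integral_Ioc_zero_one_rpow_sub_one hb, integral_Ioi_one_rpow_neg_sub_one hb]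
        ring

end TwoSidedPowerBound

lemma continuousOn_cpow_mul {ψ : ℝ → ℂ} (hc : ContinuousOn ψ (Ioi 0)) (w : ℂ) :
    ContinuousOn (fun y : ℝ => (y : ℂ) ^ w * ψ y) (Ioi 0) :=
  ContinuousOn.mul (fun _ hy => ((continuousAt_cpow_const (ofReal_mem_slitPlane.mpr hy)).comp
    continuous_ofReal.continuousAt).continuousWithinAt) hc

def NormLeWeight (a : ℝ) (ψ : ℝ → ℂ) : Prop :=
  ∀ x ∈ Ioi (0:ℝ), ‖ψ x‖ ≤ Real.exp (-a * |Real.log x|) / Real.sqrt x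

namespace NormLeWeight

variable {a : ℝ} {ψ : ℝ → ℂ} {y : ℝ}

lemma norm_cpow_mul_le_of_le_one (h : NormLeWeight a ψ) (w : ℂ) (hy : 0 < y) (hy1 : y ≤ 1) :
    ‖(y : ℂ) ^ w * ψ y‖ ≤ y ^ (w.re + (a - 1/2)) := by
  rw [norm_mul, norm_cpow_eq_rpow_re_of_pos hy, Real.rpow_add hy,
    ← Real.exp_neg_mul_abs_log_div_sqrt_of_le_one hy hy1]
  exact mul_le_mul_of_nonneg_left (h y hy) (Real.rpow_nonneg hy.le _)

lemma norm_cpow_mul_le_of_one_le (h : NormLeWeight a ψ) (w : ℂ) (hy1 : 1 ≤ y) :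
    ‖(y : ℂ) ^ w * ψ y‖ ≤ y ^ (w.re + (-a - 1/2)) := by
  have hy : 0 < y := one_pos.trans_le hy1
  rw [norm_mul, norm_cpow_eq_rpow_re_of_pos hy, Real.rpow_add hy,
    ← Real.exp_neg_mul_abs_log_div_sqrt_of_one_le hy1]
  exact mul_le_mul_of_nonneg_left (h y hy) (Real.rpow_nonneg hy.le _)

variable {z : ℂ}

lemma norm_cpow_sub_one_mul_le_of_mem_Ioc (h : NormLeWeight a ψ) (hy : y ∈ Ioc 0 1) :
    ‖(y : ℂ) ^ (z - 1) * ψ y‖ ≤ y ^ (a - |z.re - 1/2| - 1) := by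
  refine (h.norm_cpow_mul_le_of_le_one _ hy.1 hy.2).trans
    (Real.rpow_le_rpow_of_exponent_ge hy.1 hy.2 ?_)
  rw [sub_re, one_re]
  linarith [neg_abs_le (z.re - 1/2)]

lemma norm_cpow_sub_one_mul_le_of_mem_Ioi (h : NormLeWeight a ψ) (hy : y ∈ Ioi 1) :
    ‖(y : ℂ) ^ (z - 1) * ψ y‖ ≤ y ^ (-(a - |z.re - 1/2|) - 1) := by
  refine (h.norm_cpow_mul_le_of_one_le _ (le_of_lt hy)).trans
    (Real.rpow_le_rpow_of_exponent_le (le_of_lt hy) ?_)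
  rw [sub_re, one_re]
  linarith [le_abs_self (z.re - 1/2)]

lemma integrableOn_cpow_mul (h : NormLeWeight a ψ) (hc : ContinuousOn ψ (Ioi 0))
    (hz : |z.re - 1/2| < a) :
    IntegrableOn (fun y : ℝ => (y : ℂ) ^ (z - 1) * ψ y) (Ioi 0) :=
  integrableOn_Ioi_zero_of_norm_le_rpow (sub_pos.mpr hz)
    ((continuousOn_cpow_mul hc _).aestronglyMeasurable measurableSet_Ioi)
    (fun _ hy => h.norm_cpow_sub_one_mul_le_of_mem_Ioc hy)
    (fun _ hy => h.norm_cpow_sub_one_mul_le_of_mem_Ioi hy)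

lemma norm_integral_cpow_mul_le (h : NormLeWeight a ψ) (hc : ContinuousOn ψ (Ioi 0))
    (hz : |z.re - 1/2| < a) :
    ‖∫ y in Ioi (0:ℝ), (y : ℂ) ^ (z - 1) * ψ y‖ ≤ 2 / (a - |z.re - 1/2|) :=
  norm_integral_Ioi_zero_le_of_norm_le_rpow (sub_pos.mpr hz)
    ((continuousOn_cpow_mul hc _).aestronglyMeasurable measurableSet_Ioi)
    (fun _ hy => h.norm_cpow_sub_one_mul_le_of_mem_Ioc hy)
    (fun _ hy => h.norm_cpow_sub_one_mul_le_of_mem_Ioi hy)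

lemma tendsto_cpow_mul_nhdsGT_zero (h : NormLeWeight a ψ) {w : ℂ} (hw : 1/2 - a < w.re) :
    Tendsto (fun y : ℝ => (y : ℂ) ^ w * ψ y) (𝓝[>] 0) (𝓝 0) := by
  have hpos : 0 < w.re + (a - 1/2) := by linarith
  have hlim : Tendsto (fun y : ℝ => y ^ (w.re + (a - 1/2))) (𝓝[>] 0) (𝓝 0) := by
    have := (Real.continuousAt_rpow_const 0 _ (Or.inr hpos.le)).tendsto.mono_left
      (nhdsWithin_le_nhds (s := Ioi 0))
    rwa [Real.zero_rpow hpos.ne'] at this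
  refine squeeze_zero_norm' ?_ hlim
  filter_upwards [Ioc_mem_nhdsGT zero_lt_one] with y hy
  exact h.norm_cpow_mul_le_of_le_one w hy.1 hy.2

lemma tendsto_cpow_mul_atTop (h : NormLeWeight a ψ) {w : ℂ} (hw : w.re < a + 1/2) :
    Tendsto (fun y : ℝ => (y : ℂ) ^ w * ψ y) atTop (𝓝 0) := by
  have hlim : Tendsto (fun y : ℝ => y ^ (w.re + (-a - 1/2))) atTop (𝓝 0) := by
    simpa only [neg_neg] using tendsto_rpow_neg_atTop (y := -(w.re + (-a - 1/2))) (by linarith)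
  refine squeeze_zero_norm' ?_ hlim
  filter_upwards [eventually_ge_atTop 1] with y hy
  exact h.norm_cpow_mul_le_of_one_le w hy

lemma isBigO_nhdsGT_zero (h : NormLeWeight a ψ) :
    ψ =O[𝓝[>] 0] (· ^ (-(1/2 - a))) := by
  refine Asymptotics.IsBigO.of_bound 1 ?_
  filter_upwards [Ioc_mem_nhdsGT zero_lt_one] with y hy
  rw [one_mul, Real.norm_of_nonneg (Real.rpow_nonneg hy.1.le _), neg_sub,
    ← Real.exp_neg_mul_abs_log_div_sqrt_of_le_one hy.1 hy.2]
  exact h y hy.1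

lemma isBigO_atTop (h : NormLeWeight a ψ) : ψ =O[atTop] (· ^ (-(a + 1/2))) := by
  refine Asymptotics.IsBigO.of_bound 1 ?_
  filter_upwards [eventually_ge_atTop 1] with y hy
  rw [one_mul, Real.norm_of_nonneg (Real.rpow_nonneg (zero_le_one.trans hy) _), neg_add',
    ← Real.exp_neg_mul_abs_log_div_sqrt_of_one_le hy]
  exact h y (one_pos.trans_le hy)

lemma analyticOnNhd_mellin (h : NormLeWeight a ψ) (hc : ContinuousOn ψ (Ioi 0)) :
    AnalyticOnNhd ℂ (mellin ψ) {z : ℂ | |z.re - 1/2| < a} := by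
  refine DifferentiableOn.analyticOnNhd (fun z (hz : |z.re - 1/2| < a) => ?_)
    (isOpen_lt (continuous_abs.comp (continuous_re.sub continuous_const)) continuous_const)
  obtain ⟨hz₀, hz₁⟩ := abs_lt.mp hz
  exact (mellin_differentiableAt_of_isBigO_rpow (hc.locallyIntegrableOn measurableSet_Ioi)
    h.isBigO_atTop (by linarith) h.isBigO_nhdsGT_zero (by linarith)).differentiableWithinAt

end NormLeWeight

lemma mr₁_eq_mellin (φ : ℝ → ℂ) : mr₁ φ = mellin φ := rfl

lemma mul_mr₁_eq_neg_integral {a : ℝ} {φ φ' : ℝ → ℂ} {z : ℂ}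
    (hφd : ∀ x ∈ Ioi (0:ℝ), HasDerivAt φ (φ' x) x) (hφ : NormLeWeight a φ)
    (hφ' : IntegrableOn (fun y : ℝ => (y : ℂ) ^ (z - 1) * ((y : ℂ) * φ' y)) (Ioi 0))
    (hz : |z.re - 1/2| < a) :
    z * mr₁ φ z = -∫ y in Ioi (0:ℝ), (y : ℂ) ^ (z - 1) * ((y : ℂ) * φ' y) := by
  obtain ⟨hz₀, hz₁⟩ := abs_lt.mp hz
  have hφc : ContinuousOn φ (Ioi 0) := fun x hx => (hφd x hx).continuousAt.continuousWithinAt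
  have hcpow : EqOn (fun y : ℝ => (y : ℂ) ^ (z - 1) * ((y : ℂ) * φ' y))
      (fun y : ℝ => (y : ℂ) ^ z * φ' y) (Ioi 0) := fun y hy => by
    dsimp only
    have hy₀ : (y : ℂ) ≠ 0 := ofReal_ne_zero.mpr (ne_of_gt hy)
    rw [← mul_assoc, cpow_sub _ _ hy₀, cpow_one, div_mul_cancel₀ _ hy₀]
  have hu : ∀ x ∈ Ioi (0:ℝ), HasDerivAt (fun y : ℝ => (y : ℂ) ^ z) (z * (x : ℂ) ^ (z - 1)) x :=
    fun x hx => (hasStrictDerivAt_cpow_const (ofReal_mem_slitPlane.mpr hx)).hasDerivAt.comp_ofReal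
  have hu'φ : IntegrableOn (fun y : ℝ => z * (y : ℂ) ^ (z - 1) * φ y) (Ioi 0) := by
    have : IntegrableOn (fun y : ℝ => z * ((y : ℂ) ^ (z - 1) * φ y)) (Ioi 0) :=
      (hφ.integrableOn_cpow_mul hφc hz).const_mul z
    simpa only [mul_assoc] using this
  have hibp := integral_Ioi_mul_deriv_eq_deriv_mul hu hφd (hφ'.congr_fun hcpow measurableSet_Ioi)
    hu'φ (hφ.tendsto_cpow_mul_nhdsGT_zero (by linarith))
    (hφ.tendsto_cpow_mul_atTop (by linarith))
  simp only [mul_assoc, integral_const_mul, sub_zero, zero_sub] at hibp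
  rw [setIntegral_congr_fun measurableSet_Ioi hcpow, hibp, neg_neg, mr₁]

/-- for `ε > 0`, `a ≥ 2 + ε` and `φ` continuously differentiable on `(0,∞)` with
`|φ(x)| ≤ x^{−1/2} e^{−a|ln x|}` and `|x·φ′(x)| ≤ x^{−1/2} e^{−a|ln x|}`, the Mellin transform
`r₁` is defined on the closed strip `|Re z − 1/2| ≤ ε/2`, analytic in its interior, continuous
on the strip, and satisfies `|r₁(z)| ≤ 2/(a − ε/2) < 1`; moreover
`z·r₁(z) = −∫_0^∞ y^{z−1}(y·φ′(y)) dy`, whence `|z·r₁(z)| ≤ 2/(a − ε/2) < 1` on the strip. -/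
theorem statement_16 (ε a : ℝ) (hε : 0 < ε) (ha : 2 + ε ≤ a)
    (φ φ' : ℝ → ℂ)
    (hφd : ∀ x ∈ Ioi (0:ℝ), HasDerivAt φ (φ' x) x)
    (hφ'c : ContinuousOn φ' (Ioi 0))
    (hφb : ∀ x ∈ Ioi (0:ℝ), ‖φ x‖ ≤ Real.exp (-a * |Real.log x|) / Real.sqrt x)
    (hφ'b : ∀ x ∈ Ioi (0:ℝ), ‖(x : ℂ) * φ' x‖ ≤ Real.exp (-a * |Real.log x|) / Real.sqrt x) :
    (∀ z : ℂ, |z.re - 1/2| ≤ ε/2 →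
        IntegrableOn (fun y : ℝ => (y : ℂ) ^ (z - 1) * φ y) (Ioi 0) volume) ∧
    AnalyticOnNhd ℂ (mr₁ φ) {z : ℂ | |z.re - 1/2| < ε/2} ∧
    ContinuousOn (mr₁ φ) {z : ℂ | |z.re - 1/2| ≤ ε/2} ∧
    2 / (a - ε/2) < 1 ∧
    (∀ z : ℂ, |z.re - 1/2| ≤ ε/2 → ‖mr₁ φ z‖ ≤ 2 / (a - ε/2)) ∧
    (∀ z : ℂ, |z.re - 1/2| ≤ ε/2 →
        z * mr₁ φ z = -∫ y in Ioi (0:ℝ), (y : ℂ) ^ (z - 1) * ((y : ℂ) * φ' y)) ∧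
    (∀ z : ℂ, |z.re - 1/2| ≤ ε/2 → ‖z * mr₁ φ z‖ ≤ 2 / (a - ε/2)) := by
  have hφ : NormLeWeight a φ := hφb
  have hψ : NormLeWeight a (fun x : ℝ => (x : ℂ) * φ' x) := hφ'b
  have hφc : ContinuousOn φ (Ioi 0) := fun x hx => (hφd x hx).continuousAt.continuousWithinAt
  have hψc : ContinuousOn (fun x : ℝ => (x : ℂ) * φ' x) (Ioi 0) :=
    continuous_ofReal.continuousOn.mul hφ'c
  have hstrip : ∀ z : ℂ, |z.re - 1/2| ≤ ε/2 → |z.re - 1/2| < a := fun z hz => by linarith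
  have hbound : ∀ z : ℂ, |z.re - 1/2| ≤ ε/2 → 2 / (a - |z.re - 1/2|) ≤ 2 / (a - ε/2) :=
    fun z hz => div_le_div_of_nonneg_left zero_le_two (by linarith) (by linarith)
  have hmul : ∀ z : ℂ, |z.re - 1/2| ≤ ε/2 →
      z * mr₁ φ z = -∫ y in Ioi (0:ℝ), (y : ℂ) ^ (z - 1) * ((y : ℂ) * φ' y) := fun z hz =>
    mul_mr₁_eq_neg_integral hφd hφ (hψ.integrableOn_cpow_mul hψc (hstrip z hz)) (hstrip z hz)
  have han : AnalyticOnNhd ℂ (mr₁ φ) {z : ℂ | |z.re - 1/2| < a} := by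
    rw [mr₁_eq_mellin]
    exact hφ.analyticOnNhd_mellin hφc
  refine ⟨fun z hz => hφ.integrableOn_cpow_mul hφc (hstrip z hz),
    han.mono fun z hz => hstrip z (le_of_lt hz), han.continuousOn.mono hstrip,
    (div_lt_one (by linarith)).mpr (by linarith),
    fun z hz => (hφ.norm_integral_cpow_mul_le hφc (hstrip z hz)).trans (hbound z hz), hmul,
    fun z hz => ?_⟩
  rw [hmul z hz, norm_neg]
  exact (hψ.norm_integral_cpow_mul_le hψc (hstrip z hz)).trans (hbound z hz)
end
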